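/- arXiv:2301.02951 — 16 statements merged into one kernel-verified Lean document; each statement's English description precedes it below -/
import Mathlib

section
/- Let p = 4n-1 be prime and m a nonnegative integer. Then there is no integer k such that k^2 - 3k + 4 - 3n = m·p. -/
/-!
Completing the square, `4 (k² - 3k + 4 - 3n) = (2k - 3)² + 2² - 3p`, so `p ∣ (2k - 3)² + 2²`
while `p ∤ 2`. Then `-1` is a square modulo `p`, which is impossible since `p ≡ 3 (mod 4)`.
-/

theorem ZMod.mod_four_ne_three_of_dvd_sq_add_sq {q : ℕ} [Fact q.Prime] {x y : ℤ}
    (hdvd : (q : ℤ) ∣ x ^ 2 + y ^ 2) (hy : ¬ (q : ℤ) ∣ y) : q % 4 ≠ 3 := by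
  rw [← ZMod.intCast_zmod_eq_zero_iff_dvd] at hdvd hy
  push_cast at hdvd
  exact ZMod.mod_four_ne_three_of_sq_eq_neg_sq' hy (eq_neg_of_add_eq_zero_left hdvd)

theorem no_integer_root_shifted_general (n p m : ℤ) (hn : 1 ≤ n) (hp : p = 4 * n - 1)
    (hprime : Prime p) :
    ¬ ∃ k : ℤ, k ^ 2 - 3 * k + 4 - 3 * n = m * p := by
  rintro ⟨k, hk⟩
  lift p to ℕ using by omega
  have : Fact p.Prime := ⟨Nat.prime_iff_prime_int.mpr hprime⟩
  have hdvd : (p : ℤ) ∣ (2 * k - 3) ^ 2 + 2 ^ 2 :=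
    ⟨4 * m + 3, by linear_combination 4 * hk - 3 * hp⟩
  have hp_ndvd_two : ¬ (p : ℤ) ∣ 2 := fun h => by
    have := Int.le_of_dvd two_pos h
    omega
  exact ZMod.mod_four_ne_three_of_dvd_sq_add_sq hdvd hp_ndvd_two (by omega)

theorem no_integer_root_shifted (n p m : ℤ) (hn : 1 ≤ n) (hp : p = 4 * n - 1)
    (hprime : Prime p) (hm : 0 ≤ m) :
    ¬ ∃ k : ℤ, k ^ 2 - 3 * k + 4 - 3 * n = m * p :=
  no_integer_root_shifted_general n p m hn hp hprime
end

section
/- Let p = 4n-1 be prime with n ≥ 3, and let m be an integer with 0 ≤ m ≤ ⌊(n^2 - 4n + 5)/p⌋. Define k_m = 1 + ⌊(1 + sqrt(4mp + 12n - 7))/2⌋. Then 3 ≤ k_m ≤ n+2. -/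
/-! The integer `X = 4mp + 12n - 7` under the square root satisfies `3² ≤ X < (2n + 3)²`:
the lower bound because `m, p ≥ 0` and `n ≥ 3`, the upper one because `mp ≤ n² - 4n + 5`.
Since `⌊(1 + √x)/2⌋ ≥ j` exactly when `√x ≥ 2j - 1`, this pins `k - 1` between `2` and `n + 1`. -/

lemma le_floor_one_add_sqrt_div_two {j x : ℤ} (hj : 0 < 2 * j - 1) (hx : (2 * j - 1) ^ 2 ≤ x) :
    j ≤ ⌊(1 + √(x : ℝ)) / 2⌋ := by
  have hsqrt : ((2 * j - 1 : ℤ) : ℝ) ≤ √(x : ℝ) :=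
    (Real.le_sqrt' (by exact_mod_cast hj)).mpr (by exact_mod_cast hx)
  rw [Int.le_floor]
  push_cast at hsqrt
  linarith

lemma floor_one_add_sqrt_div_two_lt {j x : ℤ} (hj : 0 < 2 * j - 1) (hx : x < (2 * j - 1) ^ 2) :
    ⌊(1 + √(x : ℝ)) / 2⌋ < j := by
  have hsqrt : √(x : ℝ) < ((2 * j - 1 : ℤ) : ℝ) :=
    (Real.sqrt_lt' (by exact_mod_cast hj)).mpr (by exact_mod_cast hx)
  rw [Int.floor_lt]
  push_cast at hsqrt
  linarith

theorem km_bounds_general (n p m k : ℤ) (hn : 3 ≤ n) (hp : p = 4 * n - 1)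
    (hm0 : 0 ≤ m) (hmM : m ≤ (n ^ 2 - 4 * n + 5) / p)
    (hk : k = 1 + ⌊(1 + Real.sqrt ((4 * m * p + 12 * n - 7 : ℤ) : ℝ)) / 2⌋) :
    3 ≤ k ∧ k ≤ n + 2 := by
  have hp0 : 0 < p := by omega
  have hmp : m * p ≤ n ^ 2 - 4 * n + 5 := (Int.le_ediv_iff_mul_le hp0).mp hmM
  have hlow : (2 * 2 - 1) ^ 2 ≤ 4 * m * p + 12 * n - 7 := by nlinarith
  have hhigh : 4 * m * p + 12 * n - 7 < (2 * (n + 1) - 1) ^ 2 := by nlinarith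
  have hfloor_ge := le_floor_one_add_sqrt_div_two (by norm_num) hlow
  have hfloor_lt := floor_one_add_sqrt_div_two_lt (by omega) hhigh
  omega

theorem km_bounds (n p m k : ℤ) (hn : 3 ≤ n) (hp : p = 4 * n - 1)
    (hprime : Prime p) (hm0 : 0 ≤ m) (hmM : m ≤ (n ^ 2 - 4 * n + 5) / p)
    (hk : k = 1 + ⌊(1 + Real.sqrt ((4 * m * p + 12 * n - 7 : ℤ) : ℝ)) / 2⌋) :
    3 ≤ k ∧ k ≤ n + 2 :=
  km_bounds_general n p m k hn hp hm0 hmM hk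
end

section
/- Let p = 4n-1 be prime with n ≥ 3, let 0 ≤ m ≤ ⌊(n^2-4n+5)/p⌋, and let k_m = 1 + ⌊(1 + sqrt(4mp + 12n - 7))/2⌋. Then the residue of (k_m - 1)^2 modulo p equals (k_m - 1)^2 - m·p, and it satisfies 3n - k_m - 1 < (k_m - 1)^2 - m·p ≤ 3n + k_m - 4. -/
/-!
With `D = 4mp + 12n - 7` and `j = k - 1`, the floor gives `(2j - 1)² ≤ D < (2j + 1)²`.
Since `D ≡ -4 [ZMOD p]` and `p ≡ 3 [MOD 4]`, `D` is not a square, and as both `D` and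
`(2j - 1)²` are `≡ 1 [ZMOD 4]` we get `(2j - 1)² + 4 ≤ D`; dividing by `4` these are exactly
the two bounds on `j² - mp`. The bound on `m` forces `j ≤ n + 1`, which places `j² - mp` in
`[0, p)`, so it is the residue of `j²`.
-/

theorem Nat.Prime.not_dvd_sq_add_sq_of_mod_four_eq_three {p : ℕ} (hp : p.Prime) (hp3 : p % 4 = 3)
    {a b : ℤ} (hb : ¬ (p : ℤ) ∣ b) : ¬ (p : ℤ) ∣ a ^ 2 + b ^ 2 := by
  have := Fact.mk hp
  intro hdvd
  have hsq : (a : ZMod p) ^ 2 = -(b : ZMod p) ^ 2 := by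
    rw [eq_neg_iff_add_eq_zero]
    exact_mod_cast (ZMod.intCast_zmod_eq_zero_iff_dvd _ p).2 hdvd
  exact ZMod.mod_four_ne_three_of_sq_eq_neg_sq'
    (by rwa [Ne, ZMod.intCast_zmod_eq_zero_iff_dvd]) hsq hp3

theorem sq_two_mul_floor_one_add_sqrt_div_two_bounds {x : ℝ} (hx : 1 ≤ x) :
    (2 * ⌊(1 + √x) / 2⌋ - 1 : ℝ) ^ 2 ≤ x ∧ x < (2 * ⌊(1 + √x) / 2⌋ + 1 : ℝ) ^ 2 := by
  have hsqrt : 1 ≤ √x := Real.one_le_sqrt.mpr hx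
  have hj : (1 : ℝ) ≤ ⌊(1 + √x) / 2⌋ := by
    exact_mod_cast Int.le_floor.mpr (by push_cast; linarith)
  have hfloor := Int.floor_le ((1 + √x) / 2)
  have hceil := Int.lt_floor_add_one ((1 + √x) / 2)
  generalize ⌊(1 + √x) / 2⌋ = j at *
  rw [← Real.sq_sqrt (zero_le_one.trans hx)]
  constructor
  · exact pow_le_pow_left₀ (by linarith) (by linarith) 2
  · exact pow_lt_pow_left₀ (by linarith) (Real.sqrt_nonneg x) two_ne_zero

theorem km_residue_bounds (n p m k : ℤ) (hn : 3 ≤ n) (hp : p = 4 * n - 1)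
    (hprime : Prime p) (hm0 : 0 ≤ m) (hmM : m ≤ (n ^ 2 - 4 * n + 5) / p)
    (hk : k = 1 + ⌊(1 + Real.sqrt ((4 * m * p + 12 * n - 7 : ℤ) : ℝ)) / 2⌋) :
    (k - 1) ^ 2 % p = (k - 1) ^ 2 - m * p ∧
      3 * n - k - 1 < (k - 1) ^ 2 - m * p ∧ (k - 1) ^ 2 - m * p ≤ 3 * n + k - 4 := by
  have hp0 : 0 < p := by omega
  have hmp : 0 ≤ m * p := mul_nonneg hm0 hp0.le
  have hmp_le : m * p ≤ n ^ 2 - 4 * n + 5 := by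
    have := (Int.le_ediv_iff_mul_le hp0).mp hmM; linarith
  set D := 4 * m * p + 12 * n - 7 with hD
  obtain ⟨j, rfl⟩ : ∃ j, k = j + 1 := ⟨k - 1, by ring⟩
  replace hk : j = ⌊(1 + √(D : ℝ)) / 2⌋ := by omega
  obtain ⟨hlow, hhigh⟩ := sq_two_mul_floor_one_add_sqrt_div_two_bounds (x := (D : ℝ))
    (by exact_mod_cast (by nlinarith : 1 ≤ D))
  rw [← hk] at hlow hhigh
  replace hlow : (2 * j - 1) ^ 2 ≤ D := by exact_mod_cast hlow
  replace hhigh : D < (2 * j + 1) ^ 2 := by exact_mod_cast hhigh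
  have hne : (2 * j - 1) ^ 2 ≠ D := by
    lift p to ℕ using hp0.le
    refine fun h ↦ (Nat.prime_iff_prime_int.mpr hprime).not_dvd_sq_add_sq_of_mod_four_eq_three
      (a := 2 * j - 1) (b := 2) (by omega)
      (fun h2 ↦ by have := Int.le_of_dvd two_pos h2; omega) ⟨4 * m + 3, ?_⟩
    rw [h, hD]; linear_combination (-3) * hp
  have hjn : j ≤ n + 1 := by nlinarith
  have hlower : 3 * n - j - 2 < j ^ 2 - m * p := by nlinarith
  have hupper : j ^ 2 - m * p ≤ 3 * n + j - 3 := by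
    have : 4 * j ^ 2 - 4 * j + 1 < 4 * (m * p) + 12 * n - 7 := by
      nlinarith [lt_of_le_of_ne hlow hne]
    omega
  simp only [add_sub_cancel_right]
  exact ⟨((Int.ediv_emod_unique (q := m) hp0).mpr ⟨by ring, by omega, by omega⟩).2,
    by omega, by omega⟩
end

section
/- Let p = 4n-1 be prime with n ≥ 3, let 0 ≤ m ≤ ⌊(n^2-4n+5)/p⌋, and let k_m = 1 + ⌊(1 + sqrt(4mp + 12n - 7))/2⌋. Then k_m is a jump, i.e. r_p((k_m - 1)^2) + r_p(k_m + 1 - 3n) ≥ p. -/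
/-! Write `j = k_m - 1`. The floor defining `k_m` pins `j` down by
`(2j - 1)² ≤ 4mp + 12n - 7 < (2j + 1)²`, i.e. `j(j - 1) ≤ mp + 3n - 2 < j(j + 1)`.
The bound `mp ≤ n² - 4n + 5` forces `j ≤ n`, so `j² - mp` lies in `[0, p)` and is the residue
of `j²`, while the residue of `j + 2 - 3n` is `j + n + 1`. The strict upper inequality then makes
the sum at least `4n = p + 1`. -/

lemma sq_le_and_lt_sq_of_eq_floor_one_add_sqrt_div_two {D j : ℤ} (hD : 1 ≤ D)
    (hj : j = ⌊(1 + √(D : ℝ)) / 2⌋) :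
    (2 * j - 1) ^ 2 ≤ D ∧ D < (2 * j + 1) ^ 2 := by
  have hD' : (1 : ℝ) ≤ D := by exact_mod_cast hD
  have hsqrt : 1 ≤ √(D : ℝ) := Real.one_le_sqrt.mpr hD'
  have hlow : 2 * (j : ℝ) - 1 ≤ √(D : ℝ) := by
    rw [hj]; linarith [Int.floor_le ((1 + √(D : ℝ)) / 2)]
  have hup : √(D : ℝ) < 2 * (j : ℝ) + 1 := by
    rw [hj]; linarith [Int.lt_floor_add_one ((1 + √(D : ℝ)) / 2)]
  have hj1 : (1 : ℝ) ≤ j := by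
    rw [hj]; exact_mod_cast Int.le_floor.mpr (by push_cast; linarith)
  constructor
  · have := (Real.le_sqrt (by linarith) (by linarith)).mp hlow
    exact_mod_cast this
  · have := (Real.sqrt_lt' (by linarith)).mp hup
    exact_mod_cast this

lemma sq_emod_add_emod_ge {n p m j : ℤ} (hn : 2 ≤ n) (hp : p = 4 * n - 1)
    (hmp : m * p ≤ n ^ 2 - 4 * n + 5)
    (hlow : (2 * j - 1) ^ 2 ≤ 4 * m * p + 12 * n - 7)
    (hup : 4 * m * p + 12 * n - 7 < (2 * j + 1) ^ 2) :
    j ^ 2 % p + (j + 2 - 3 * n) % p ≥ p := by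
  have hpos : 0 < p := by omega
  have hj_le : j ≤ n := by nlinarith
  have hj_ge : -n - 1 ≤ j := by nlinarith
  have hsq : j ^ 2 % p = j ^ 2 - m * p :=
    ((Int.ediv_emod_unique (q := m) hpos).mpr ⟨by ring, by nlinarith, by nlinarith⟩).2
  have hlin : (j + 2 - 3 * n) % p = j + n + 1 :=
    ((Int.ediv_emod_unique (q := -1) hpos).mpr ⟨by rw [hp]; ring, by omega, by omega⟩).2
  rw [hsq, hlin]
  nlinarith

theorem km_is_jump_general (n p m k : ℤ) (hn : 3 ≤ n) (hp : p = 4 * n - 1)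
    (hm0 : 0 ≤ m) (hmM : m ≤ (n ^ 2 - 4 * n + 5) / p)
    (hk : k = 1 + ⌊(1 + Real.sqrt ((4 * m * p + 12 * n - 7 : ℤ) : ℝ)) / 2⌋) :
    (k - 1) ^ 2 % p + (k + 1 - 3 * n) % p ≥ p := by
  have hpos : 0 < p := by omega
  have hmp : m * p ≤ n ^ 2 - 4 * n + 5 := (Int.le_ediv_iff_mul_le hpos).mp hmM
  have hD : 1 ≤ 4 * m * p + 12 * n - 7 := by nlinarith
  obtain ⟨hlow, hup⟩ :=
    sq_le_and_lt_sq_of_eq_floor_one_add_sqrt_div_two hD (j := k - 1) (by omega)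
  rw [show k + 1 - 3 * n = k - 1 + 2 - 3 * n by ring]
  exact sq_emod_add_emod_ge (by omega) hp hmp hlow hup

theorem km_is_jump (n p m k : ℤ) (hn : 3 ≤ n) (hp : p = 4 * n - 1)
    (hprime : Prime p) (hm0 : 0 ≤ m) (hmM : m ≤ (n ^ 2 - 4 * n + 5) / p)
    (hk : k = 1 + ⌊(1 + Real.sqrt ((4 * m * p + 12 * n - 7 : ℤ) : ℝ)) / 2⌋) :
    (k - 1) ^ 2 % p + (k + 1 - 3 * n) % p ≥ p :=
  km_is_jump_general n p m k hn hp hm0 hmM hk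
end

section
/- Let p = 4n-1 be prime with n ≥ 3, let k_m = 1 + ⌊(1 + sqrt(4mp + 12n - 7))/2⌋ for 0 ≤ m ≤ ⌊(n^2-4n+5)/p⌋. If k is an integer with k ≤ n+2 and k_m < k ≤ 1 + ⌊sqrt(mp + p - 1)⌋, then k is a jump and 3n + k - 3 < r_p((k-1)^2) = (k-1)^2 - m·p. -/
/-!
The hypothesis `km < k` says `4mp + 12n - 7 < (2k - 3)²`, i.e. `(k - 1)² - mp ≥ 3n + k - 2`, and
`k ≤ 1 + ⌊√(mp + p - 1)⌋` says `(k - 1)² - mp < p`. Hence `(k - 1)² - mp` is the residue of `(k - 1)²`,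
while `k ≤ n + 2` makes `k + n` the residue of `k + 1 - 3n`; the two residues add up to at least
`4n + 2k - 2 ≥ p`.
-/

namespace Int

theorem sq_le_of_le_floor_sqrt {a N : ℤ} (ha : 0 < a) (h : a ≤ ⌊√(N : ℝ)⌋) : a ^ 2 ≤ N := by
  have hle : (a : ℝ) ≤ √(N : ℝ) := le_floor.1 h
  exact_mod_cast (Real.le_sqrt' (by exact_mod_cast ha)).1 hle

theorem lt_sq_of_floor_half_one_add_sqrt_lt {b N : ℤ} (h : ⌊(1 + √(N : ℝ)) / 2⌋ < b) :
    N < (2 * b - 1) ^ 2 := by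
  have hlt : √(N : ℝ) < 2 * b - 1 := by linarith [floor_lt.1 h]
  have hpos : (0 : ℝ) < 2 * b - 1 := (Real.sqrt_nonneg _).trans_lt hlt
  exact_mod_cast (Real.sqrt_lt' hpos).1 hlt

theorem emod_eq_sub_mul {a b q : ℤ} (h₀ : 0 ≤ a - q * b) (h₁ : a - q * b < b) :
    a % b = a - q * b :=
  ((Int.ediv_emod_unique (q := q) (h₀.trans_lt h₁)).2 ⟨by ring, h₀, h₁⟩).2

end Int

theorem jumps_after_km_general (n p m k km : ℤ) (hn : 3 ≤ n) (hp : p = 4 * n - 1)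
    (hkm : km = 1 + ⌊(1 + Real.sqrt ((4 * m * p + 12 * n - 7 : ℤ) : ℝ)) / 2⌋)
    (hk1 : k ≤ n + 2) (hk2 : km < k)
    (hk3 : k ≤ 1 + ⌊Real.sqrt ((m * p + p - 1 : ℤ) : ℝ)⌋) :
    (k - 1) ^ 2 % p + (k + 1 - 3 * n) % p ≥ p ∧
      (k - 1) ^ 2 % p = (k - 1) ^ 2 - m * p ∧
      3 * n + k - 3 < (k - 1) ^ 2 - m * p := by
  have hk : 2 ≤ k := by
    have : 0 ≤ ⌊(1 + Real.sqrt ((4 * m * p + 12 * n - 7 : ℤ) : ℝ)) / 2⌋ :=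
      Int.floor_nonneg.2 (by positivity)
    omega
  have hlower : 4 * m * p + 12 * n - 7 < (2 * (k - 1) - 1) ^ 2 :=
    Int.lt_sq_of_floor_half_one_add_sqrt_lt (by omega)
  have hupper : (k - 1) ^ 2 ≤ m * p + p - 1 := Int.sq_le_of_le_floor_sqrt (by omega) (by omega)
  have hsquare : (k - 1) ^ 2 % p = (k - 1) ^ 2 - m * p :=
    Int.emod_eq_sub_mul (by linarith) (by linarith)
  have hlinear : (k + 1 - 3 * n) % p = k + n := by
    rw [Int.emod_eq_sub_mul (q := -1) (by omega) (by omega)]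
    omega
  refine ⟨?_, hsquare, by linarith⟩
  rw [hsquare, hlinear]
  linarith

theorem jumps_after_km (n p m k km : ℤ) (hn : 3 ≤ n) (hp : p = 4 * n - 1)
    (hprime : Prime p) (hm0 : 0 ≤ m) (hmM : m ≤ (n ^ 2 - 4 * n + 5) / p)
    (hkm : km = 1 + ⌊(1 + Real.sqrt ((4 * m * p + 12 * n - 7 : ℤ) : ℝ)) / 2⌋)
    (hk1 : k ≤ n + 2) (hk2 : km < k)
    (hk3 : k ≤ 1 + ⌊Real.sqrt ((m * p + p - 1 : ℤ) : ℝ)⌋) :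
    (k - 1) ^ 2 % p + (k + 1 - 3 * n) % p ≥ p ∧
      (k - 1) ^ 2 % p = (k - 1) ^ 2 - m * p ∧
      3 * n + k - 3 < (k - 1) ^ 2 - m * p :=
  jumps_after_km_general n p m k km hn hp hkm hk1 hk2 hk3
end

section
/- Let p = 4n-1 be prime with n ≥ 2, and let 2 ≤ k ≤ n+2. If r_p((k-1)^2) < 3n - k - 1, then Γ(k) < p and Γ(p+2-k) < p. If 3n - k - 1 ≤ r_p((k-1)^2) < 3n + k - 3, then Γ(p+2-k) < p ≤ Γ(k). If 3n + k - 3 ≤ r_p((k-1)^2), then p ≤ Γ(k) and p ≤ Γ(p+2-k). -/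
/-!
Modulo `p = 4n - 1` the linear terms reduce to `r_p(k + 1 - 3n) = k + n` and
`r_p(p + 3 - k - 3n) = n + 2 - k`, and `(p + 1 - k)² ≡ (k - 1)²`. So with `r = r_p((k - 1)²)`,
`Γ(k) = r + k + n` and `Γ(p + 2 - k) = r + n + 2 - k`, and the three cases are exactly the
comparisons of `r` with `p - k - n = 3n - k - 1` and with `p - n - 2 + k = 3n + k - 3`.
-/

theorem Int.self_sub_sq_emod (p a : ℤ) : (p - a) ^ 2 % p = a ^ 2 % p := by
  rw [show (p - a) ^ 2 = a ^ 2 + (p - 2 * a) * p by ring, Int.add_mul_emod_self_right]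

theorem three_chunks_A_general (n p k : ℤ) (hn : 2 ≤ n) (hp : p = 4 * n - 1)
    (hk1 : 2 ≤ k) (hk2 : k ≤ n + 2) :
    ((k - 1) ^ 2 % p < 3 * n - k - 1 →
        (k - 1) ^ 2 % p + (k + 1 - 3 * n) % p < p ∧
        (p + 2 - k - 1) ^ 2 % p + (p + 2 - k + 1 - 3 * n) % p < p) ∧
    (3 * n - k - 1 ≤ (k - 1) ^ 2 % p → (k - 1) ^ 2 % p < 3 * n + k - 3 →
        (p + 2 - k - 1) ^ 2 % p + (p + 2 - k + 1 - 3 * n) % p < p ∧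
        p ≤ (k - 1) ^ 2 % p + (k + 1 - 3 * n) % p) ∧
    (3 * n + k - 3 ≤ (k - 1) ^ 2 % p →
        p ≤ (k - 1) ^ 2 % p + (k + 1 - 3 * n) % p ∧
        p ≤ (p + 2 - k - 1) ^ 2 % p + (p + 2 - k + 1 - 3 * n) % p) := by
  have hp0 : 0 < p := by omega
  have hlow : (k + 1 - 3 * n) % p = k + n := by
    rw [show k + 1 - 3 * n = k + n + (-1) * p by omega, Int.add_mul_emod_self_right,
      Int.emod_eq_of_lt (by omega) (by omega)]
  have hhigh : (p + 2 - k + 1 - 3 * n) % p = n + 2 - k := by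
    rw [show p + 2 - k + 1 - 3 * n = n + 2 - k by omega, Int.emod_eq_of_lt (by omega) (by omega)]
  have hrefl : (p + 2 - k - 1) ^ 2 % p = (k - 1) ^ 2 % p := by
    rw [show p + 2 - k - 1 = p - (k - 1) by ring, Int.self_sub_sq_emod]
  have hr0 : 0 ≤ (k - 1) ^ 2 % p := Int.emod_nonneg _ hp0.ne'
  have hrp : (k - 1) ^ 2 % p < p := Int.emod_lt_of_pos _ hp0
  rw [hlow, hhigh, hrefl]
  omega

theorem three_chunks_A (n p k : ℤ) (hn : 2 ≤ n) (hp : p = 4 * n - 1)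
    (hprime : Prime p) (hk1 : 2 ≤ k) (hk2 : k ≤ n + 2) :
    ((k - 1) ^ 2 % p < 3 * n - k - 1 →
        (k - 1) ^ 2 % p + (k + 1 - 3 * n) % p < p ∧
        (p + 2 - k - 1) ^ 2 % p + (p + 2 - k + 1 - 3 * n) % p < p) ∧
    (3 * n - k - 1 ≤ (k - 1) ^ 2 % p → (k - 1) ^ 2 % p < 3 * n + k - 3 →
        (p + 2 - k - 1) ^ 2 % p + (p + 2 - k + 1 - 3 * n) % p < p ∧
        p ≤ (k - 1) ^ 2 % p + (k + 1 - 3 * n) % p) ∧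
    (3 * n + k - 3 ≤ (k - 1) ^ 2 % p →
        p ≤ (k - 1) ^ 2 % p + (k + 1 - 3 * n) % p ∧
        p ≤ (p + 2 - k - 1) ^ 2 % p + (p + 2 - k + 1 - 3 * n) % p) :=
  three_chunks_A_general n p k hn hp hk1 hk2
end

section
/- Let p = 4n-1 be prime with n ≥ 2, and let n+3 ≤ k ≤ 2n. If r_p((k-1)^2) < k - n - 2, then Γ(k) < p and Γ(p+2-k) < p. If k - n - 2 ≤ r_p((k-1)^2) < 3n - k - 1, then Γ(k) < p ≤ Γ(p+2-k). If 3n - k - 1 ≤ r_p((k-1)^2), then p ≤ Γ(k) and p ≤ Γ(p+2-k). -/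
/-! Since `p + 2 - k - 1 = p - (k - 1)`, both values of `Γ` share the square residue
`r = r_p((k - 1)^2)`. Their linear arguments `k + 1 - 3n` and `n + 2 - k` lie in `[-p, 0)`,
so their residues are `k + n` and `5n + 1 - k`. Hence `Γ(k) < p ↔ r < 3n - k - 1` and
`Γ(p + 2 - k) < p ↔ r < k - n - 2`, and the three cases are the three ranges of `r`
(note `k - n - 2 ≤ 3n - k - 1` as `k ≤ 2n`). -/

namespace Int

theorem emod_eq_add_self_of_neg {a b : ℤ} (hba : -b ≤ a) (ha : a < 0) : a % b = a + b := by
  rw [emod_eq_add_self_emod, emod_eq_of_lt (by omega) (by omega)]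

theorem sub_sq_emod_self_left (p x : ℤ) : (p - x) ^ 2 % p = x ^ 2 % p := by
  have h : (p - x) ^ 2 = x ^ 2 + p * (p - 2 * x) := by ring
  rw [h, add_mul_emod_self_left]

end Int

theorem three_chunks_B_general (n p k : ℤ) (hp : p = 4 * n - 1)
    (hk1 : n + 3 ≤ k) (hk2 : k ≤ 2 * n) :
    ((k - 1) ^ 2 % p < k - n - 2 →
        (k - 1) ^ 2 % p + (k + 1 - 3 * n) % p < p ∧
        (p + 2 - k - 1) ^ 2 % p + (p + 2 - k + 1 - 3 * n) % p < p) ∧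
    (k - n - 2 ≤ (k - 1) ^ 2 % p → (k - 1) ^ 2 % p < 3 * n - k - 1 →
        (k - 1) ^ 2 % p + (k + 1 - 3 * n) % p < p ∧
        p ≤ (p + 2 - k - 1) ^ 2 % p + (p + 2 - k + 1 - 3 * n) % p) ∧
    (3 * n - k - 1 ≤ (k - 1) ^ 2 % p →
        p ≤ (k - 1) ^ 2 % p + (k + 1 - 3 * n) % p ∧
        p ≤ (p + 2 - k - 1) ^ 2 % p + (p + 2 - k + 1 - 3 * n) % p) := by
  have hlin : (k + 1 - 3 * n) % p = k + n := by
    rw [Int.emod_eq_add_self_of_neg (by omega) (by omega)]; omega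
  have hlin' : (p + 2 - k + 1 - 3 * n) % p = 5 * n + 1 - k := by
    rw [Int.emod_eq_add_self_of_neg (by omega) (by omega)]; omega
  have hsq : (p + 2 - k - 1) ^ 2 % p = (k - 1) ^ 2 % p := by
    rw [show p + 2 - k - 1 = p - (k - 1) by ring, Int.sub_sq_emod_self_left]
  rw [hlin, hlin', hsq]
  omega

theorem three_chunks_B (n p k : ℤ) (hn : 2 ≤ n) (hp : p = 4 * n - 1)
    (hprime : Prime p) (hk1 : n + 3 ≤ k) (hk2 : k ≤ 2 * n) :
    ((k - 1) ^ 2 % p < k - n - 2 →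
        (k - 1) ^ 2 % p + (k + 1 - 3 * n) % p < p ∧
        (p + 2 - k - 1) ^ 2 % p + (p + 2 - k + 1 - 3 * n) % p < p) ∧
    (k - n - 2 ≤ (k - 1) ^ 2 % p → (k - 1) ^ 2 % p < 3 * n - k - 1 →
        (k - 1) ^ 2 % p + (k + 1 - 3 * n) % p < p ∧
        p ≤ (p + 2 - k - 1) ^ 2 % p + (p + 2 - k + 1 - 3 * n) % p) ∧
    (3 * n - k - 1 ≤ (k - 1) ^ 2 % p →
        p ≤ (k - 1) ^ 2 % p + (k + 1 - 3 * n) % p ∧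
        p ≤ (p + 2 - k - 1) ^ 2 % p + (p + 2 - k + 1 - 3 * n) % p) :=
  three_chunks_B_general n p k hp hk1 hk2
end

section
/- Let p = 4n-1 be prime with n > 3. Define A_≥ = {k ∈ ℤ : 2 ≤ k ≤ n+2 and r_p((k-1)^2) ≥ 3n+k-3} and B_< = {k ∈ ℤ : n+3 ≤ k ≤ 2n and r_p((k-1)^2) < k-n-2}. Then the map f(k) = 2n+2-k is a bijection from A_≥ onto B_<. -/
/-!
Put `j = 2n + 2 - k`. Since `(j - 1)² - (k - 1)² = 4n(n + 1 - k)` and `4n ≡ 1 (mod p)`, the residue of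
`(j - 1)²` is that of `r + (n + 1 - k)`, where `r = r_p((k - 1)²)`; the relation is symmetric in `j` and `k`.
For `k ∈ A_≥` this sum lies in `[p - 1, 2p)`, and as `p ≡ 3 (mod 4)` no square is `≡ -1`, so it is at
least `p` and reducing it by `p` lands in the range defining `B_<`. For `j ∈ B_<` the sum
`r_p((j - 1)²) + (n + 1 - j)` is negative, and adding `p` lands in the range defining `A_≥`.
Since `k ↦ 2n + 2 - k` is an involution, the two inclusions give the bijection.
-/

def setAGe (n p : ℤ) : Set ℤ :=
  {k : ℤ | 2 ≤ k ∧ k ≤ n + 2 ∧ 3 * n + k - 3 ≤ (k - 1) ^ 2 % p}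

def setBLt (n p : ℤ) : Set ℤ :=
  {k : ℤ | n + 3 ≤ k ∧ k ≤ 2 * n ∧ (k - 1) ^ 2 % p < k - n - 2}

theorem Int.sq_emod_ne_sub_one_of_emod_four_eq_three {p : ℤ} (hp : Prime p) (hp0 : 0 < p)
    (hp3 : p % 4 = 3) (x : ℤ) : x ^ 2 % p ≠ p - 1 := by
  lift p to ℕ using hp0.le
  have := Fact.mk (Nat.prime_iff_prime_int.mpr hp)
  intro hx
  have hsq : (x : ZMod p) ^ 2 = -1 := by
    have := congrArg (fun a : ℤ => (a : ZMod p)) hx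
    push_cast [ZMod.intCast_mod, ZMod.natCast_self] at this
    simpa using this
  exact ZMod.mod_four_ne_three_of_sq_eq_neg_one hsq (by omega)

theorem sq_emod_eq_of_add_eq {n p j k : ℤ} (hp : p = 4 * n - 1) (hjk : j + k = 2 * n + 2) :
    (j - 1) ^ 2 % p = ((k - 1) ^ 2 % p + (n + 1 - k)) % p := by
  have hdiff : (j - 1) ^ 2 = (k - 1) ^ 2 + (n + 1 - k) + p * (n + 1 - k) := by
    obtain rfl : j = 2 * n + 2 - k := by omega
    rw [hp]; ring
  rw [hdiff, Int.add_mul_emod_self_left, Int.emod_add_emod]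

theorem Int.emod_eq_sub_self_of_le_of_lt {a b : ℤ} (h₁ : b ≤ a) (h₂ : a < 2 * b) :
    a % b = a - b := by
  rw [← Int.sub_emod_right, Int.emod_eq_of_lt (by omega) (by omega)]

theorem Int.emod_eq_add_self_of_neg_s9 {a b : ℤ} (h₁ : -b ≤ a) (h₂ : a < 0) : a % b = a + b := by
  rw [← Int.add_emod_right, Int.emod_eq_of_lt (by omega) (by omega)]

theorem mapsTo_setAGe_setBLt {n p : ℤ} (hn : 0 < n) (hp : p = 4 * n - 1)
    (hsq : ∀ x : ℤ, x ^ 2 % p ≠ p - 1) :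
    Set.MapsTo (fun k : ℤ => 2 * n + 2 - k) (setAGe n p) (setBLt n p) := by
  rintro k ⟨hk2, hkn, hr⟩
  dsimp only [setBLt, Set.mem_ofPred_eq]
  generalize hj : 2 * n + 2 - k = j
  have hr_lt : (k - 1) ^ 2 % p < p := Int.emod_lt_of_pos _ (by omega)
  have hr_ne := hsq (k - 1)
  have hs := sq_emod_eq_of_add_eq (j := j) (k := k) hp (by omega)
  have hsum_ne : (k - 1) ^ 2 % p + (n + 1 - k) ≠ p - 1 := fun h =>
    hsq (j - 1) (by rw [hs, h]; exact Int.emod_eq_of_lt (by omega) (by omega))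
  replace hs := hs.trans (Int.emod_eq_sub_self_of_le_of_lt (by omega) (by omega))
  exact ⟨by omega, by omega, by omega⟩

theorem mapsTo_setBLt_setAGe {n p : ℤ} (hp : p = 4 * n - 1) :
    Set.MapsTo (fun j : ℤ => 2 * n + 2 - j) (setBLt n p) (setAGe n p) := by
  rintro j ⟨hj3, hjn, hr⟩
  dsimp only [setAGe, Set.mem_ofPred_eq]
  generalize hk : 2 * n + 2 - j = k
  have hr0 : 0 ≤ (j - 1) ^ 2 % p := Int.emod_nonneg _ (by omega)
  have hs := sq_emod_eq_of_add_eq (j := k) (k := j) hp (by omega)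
  replace hs := hs.trans (Int.emod_eq_add_self_of_neg_s9 (by omega) (by omega))
  exact ⟨by omega, by omega, by omega⟩

theorem bijection_Age_Blt (n p : ℤ) (hn : 3 < n) (hp : p = 4 * n - 1)
    (hprime : Prime p) :
    Set.BijOn (fun k : ℤ => 2 * n + 2 - k)
      {k : ℤ | 2 ≤ k ∧ k ≤ n + 2 ∧ 3 * n + k - 3 ≤ (k - 1) ^ 2 % p}
      {k : ℤ | n + 3 ≤ k ∧ k ≤ 2 * n ∧ (k - 1) ^ 2 % p < k - n - 2} := by
  have hsq := Int.sq_emod_ne_sub_one_of_emod_four_eq_three hprime (by omega) (by omega)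
  have hinv : Set.InvOn (fun k : ℤ => 2 * n + 2 - k) (fun k : ℤ => 2 * n + 2 - k)
      (setAGe n p) (setBLt n p) :=
    ⟨fun k _ => sub_sub_cancel _ k, fun k _ => sub_sub_cancel _ k⟩
  exact hinv.bijOn (mapsTo_setAGe_setBLt (by omega) hp hsq) (mapsTo_setBLt_setAGe hp)
end

section
/- Let p = 4n-1 be prime with n > 3. An integer k satisfies n+3 ≤ k ≤ 2n and k-n-2 ≤ r_p((k-1)^2) < 3n-k-1 if and only if there is an integer m with 1 ≤ m ≤ ⌊(n^2-4n+5)/p⌋ such that k = 2n - ⌊sqrt(mp - 1)⌋. -/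
/-!
Write `k = 2n - j`. Since `(2n - j - 1)² = (n - j - 1) p + (j² + j + n)`, the residue condition on `k`
says that some multiple `m p` lies in `[j² + 2, j² + 2j + 2]`, and the range of `k` bounds that
multiple by `(n - 3)² + 2(n - 3) + 2 = n² - 4n + 5`. As `p ≡ 3 (mod 4)`, no multiple of `p` has
the form `x² + 1`, so the interval shrinks to `[j² + 2, (j + 1)²]`, i.e. `⌊√(m p - 1)⌋ = j`.
-/

theorem Int.emod_mem_Ico_iff {a p lo hi : ℤ} (hp : 0 < p) (hlo : 0 ≤ lo) (hhi : hi ≤ p) :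
    (lo ≤ a % p ∧ a % p < hi) ↔ ∃ m, lo ≤ a - m * p ∧ a - m * p < hi := by
  constructor
  · intro h
    exact ⟨a / p, by rwa [Int.emod_def, mul_comm] at h⟩
  · rintro ⟨m, hlo', hhi'⟩
    have hmod : a % p = a - m * p :=
      ((Int.ediv_emod_unique (q := m) hp).mpr ⟨by ring, by omega, by omega⟩).2
    exact hmod ▸ ⟨hlo', hhi'⟩

theorem Int.floor_sqrt_eq_iff {a j : ℤ} (ha : 0 ≤ a) (hj : 0 ≤ j) :
    ⌊√(a : ℝ)⌋ = j ↔ j ^ 2 ≤ a ∧ a < (j + 1) ^ 2 := by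
  rw [Int.floor_eq_iff, Real.le_sqrt (by exact_mod_cast hj) (by exact_mod_cast ha),
    Real.sqrt_lt' (by positivity)]
  norm_cast

theorem Int.Prime.not_dvd_sq_add_one {p : ℤ} (hp : Prime p) (hp0 : 0 < p) (hp4 : p % 4 = 3)
    (x : ℤ) : ¬ p ∣ x ^ 2 + 1 := by
  lift p to ℕ using hp0.le
  have : Fact p.Prime := ⟨Int.prime_iff_natAbs_prime.mp hp⟩
  intro hdvd
  have hzero : ((x ^ 2 + 1 : ℤ) : ZMod p) = 0 := (ZMod.intCast_zmod_eq_zero_iff_dvd _ p).mpr hdvd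
  push_cast at hzero
  exact ZMod.mod_four_ne_three_of_sq_eq_neg_one (eq_neg_of_add_eq_zero_left hzero) (by omega)

theorem floor_sqrt_mul_sub_one_eq_iff {p m j : ℤ} (hsq : ∀ x : ℤ, ¬ p ∣ x ^ 2 + 1)
    (hmp : 1 ≤ m * p) (hj : 0 ≤ j) :
    ⌊√((m * p - 1 : ℤ) : ℝ)⌋ = j ↔ j ^ 2 + 2 ≤ m * p ∧ m * p ≤ j ^ 2 + 2 * j + 2 := by
  have hne : ∀ x, m * p ≠ x ^ 2 + 1 := fun x h => hsq x ⟨m, by rw [← h, mul_comm]⟩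
  have hne₀ := hne j
  have hne₁ := hne (j + 1)
  rw [Int.floor_sqrt_eq_iff (by omega) hj, add_sq]
  rw [add_sq] at hne₁
  generalize m * p = N at hne₀ hne₁ hmp ⊢
  generalize j ^ 2 = s at hne₀ hne₁ ⊢
  omega

theorem sq_pred_emod_mem_iff {n p k : ℤ} (hp : p = 4 * n - 1) (hk₁ : n + 3 ≤ k) (hk₂ : k ≤ 2 * n) :
    (k - n - 2 ≤ (k - 1) ^ 2 % p ∧ (k - 1) ^ 2 % p < 3 * n - k - 1) ↔
      ∃ m, (2 * n - k) ^ 2 + 2 ≤ m * p ∧ m * p ≤ (2 * n - k) ^ 2 + 2 * (2 * n - k) + 2 := by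
  have hsplit : (k - 1) ^ 2 = ((2 * n - k) ^ 2 + (2 * n - k) + n) + p * (k - n - 1) := by
    rw [hp]; ring
  rw [hsplit, Int.add_mul_emod_self_left, Int.emod_mem_Ico_iff (by omega) (by omega) (by omega)]
  refine exists_congr fun m => ?_
  constructor <;> rintro ⟨h₁, h₂⟩ <;> constructor <;> linarith

theorem Bbet_characterization (n p k : ℤ) (hn : 3 < n) (hp : p = 4 * n - 1)
    (hprime : Prime p) :
    (n + 3 ≤ k ∧ k ≤ 2 * n ∧ k - n - 2 ≤ (k - 1) ^ 2 % p ∧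
        (k - 1) ^ 2 % p < 3 * n - k - 1) ↔
      ∃ m : ℤ, 1 ≤ m ∧ m ≤ (n ^ 2 - 4 * n + 5) / p ∧
        k = 2 * n - ⌊Real.sqrt ((m * p - 1 : ℤ) : ℝ)⌋ := by
  have hp0 : 0 < p := by omega
  have hsq := Int.Prime.not_dvd_sq_add_one hprime hp0 (by omega)
  constructor
  · rintro ⟨hk₁, hk₂, hres⟩
    obtain ⟨m, hm⟩ := (sq_pred_emod_mem_iff hp hk₁ hk₂).mp hres
    have hmp : 0 < m * p := by nlinarith
    refine ⟨m, pos_of_mul_pos_left hmp hp0.le, (Int.le_ediv_iff_mul_le hp0).mpr (by nlinarith), ?_⟩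
    rw [(floor_sqrt_mul_sub_one_eq_iff hsq hmp (by omega)).mpr hm]
    ring
  · rintro ⟨m, hm₁, hm₂, hk⟩
    have hmp : m * p ≤ n ^ 2 - 4 * n + 5 := (Int.le_ediv_iff_mul_le hp0).mp hm₂
    set j := ⌊√((m * p - 1 : ℤ) : ℝ)⌋ with hj_def
    have hj : 0 ≤ j := Int.floor_nonneg.mpr (Real.sqrt_nonneg _)
    obtain ⟨hm, hm'⟩ := (floor_sqrt_mul_sub_one_eq_iff hsq (by nlinarith) hj).mp hj_def.symm
    have hk₁ : n + 3 ≤ k := by nlinarith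
    refine ⟨hk₁, by omega, (sq_pred_emod_mem_iff hp hk₁ (by omega)).mpr ⟨m, ?_⟩⟩
    subst hk
    simp only [sub_sub_cancel]
    exact ⟨hm, hm'⟩
end

section
/- Let p = 4n-1 be prime with n > 3. Then the set B_bet = {k ∈ ℤ : n+3 ≤ k ≤ 2n and k-n-2 ≤ r_p((k-1)^2) < 3n-k-1} has cardinality ⌊(n^2-4n+5)/p⌋. -/
/-!
Put `p = 4n - 1`, `r = (k - 1)² mod p` and `G x = ⌊(x² - x + n + 1) / p⌋ - x`. Then
`G (k - 1) - G k = ⌊(r - k + n + 2) / p⌋ - ⌊(r + k - 3n + 1) / p⌋`, and for `n + 2 ≤ k ≤ 2n` each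
floor is `0` or `-1` according as `k - n - 2 ≤ r`, resp. `3n - k - 1 ≤ r`. Hence `k` lies in the set
exactly when `G (k - 1) - G k = 1`, otherwise the difference is `0`, and the count telescopes to
`G (n + 2) - G (2n) = ⌊(n² - 4n + 5) / p⌋`.
-/

open Finset

theorem Int.ediv_eq_ite_nonneg {x p : ℤ} (h₁ : -p ≤ x) (h₂ : x < p) :
    x / p = if 0 ≤ x then 0 else -1 := by
  have hp : 0 < p := by omega
  split_ifs <;> rw [Int.ediv_eq_iff_of_pos hp] <;> omega

theorem Finset.sum_Ioc_sub_telescope {M : Type*} [AddCommGroup M] (f : ℤ → M) {a b : ℤ}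
    (hab : a ≤ b) : ∑ k ∈ Ioc a b, (f (k - 1) - f k) = f a - f b := by
  induction b, hab using Int.leInduction with
  | base => simp
  | succ b hab ih =>
    rw [← insert_Ioc_right_eq_Ioc_add_one hab, sum_insert (by simp), ih, add_sub_cancel_right]
    abel

def floorPotential (p c x : ℤ) : ℤ := (x ^ 2 - x + c) / p - x

theorem floorPotential_sub_floorPotential_add_one {p : ℤ} (hp : p ≠ 0) (c m : ℤ) :
    floorPotential p c m - floorPotential p c (m + 1) =
      (m ^ 2 % p - m + c) / p - (m ^ 2 % p + m + c - p) / p := by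
  have hdiv := Int.mul_ediv_add_emod (m ^ 2) p
  have h₀ : m ^ 2 - m + c = (m ^ 2 % p - m + c) + (m ^ 2 / p) * p := by linear_combination -hdiv
  have h₁ : (m + 1) ^ 2 - (m + 1) + c = (m ^ 2 % p + m + c - p) + (m ^ 2 / p + 1) * p := by
    linear_combination -hdiv
  simp only [floorPotential, h₀, h₁, Int.add_mul_ediv_right _ _ hp]
  ring

theorem floorPotential_sub_eq_ite {n k : ℤ} (h₁ : n + 2 ≤ k) (h₂ : k ≤ 2 * n) :
    floorPotential (4 * n - 1) (n + 1) (k - 1) - floorPotential (4 * n - 1) (n + 1) k =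
      if k - n - 2 ≤ (k - 1) ^ 2 % (4 * n - 1) ∧ (k - 1) ^ 2 % (4 * n - 1) < 3 * n - k - 1
      then 1 else 0 := by
  have hp : 0 < 4 * n - 1 := by omega
  have hr₀ := Int.emod_nonneg ((k - 1) ^ 2) hp.ne'
  have hr₁ := Int.emod_lt_of_pos ((k - 1) ^ 2) hp
  have hdiff := floorPotential_sub_floorPotential_add_one hp.ne' (n + 1) (k - 1)
  rw [sub_add_cancel] at hdiff
  rw [hdiff, Int.ediv_eq_ite_nonneg (by omega) (by omega),
    Int.ediv_eq_ite_nonneg (by omega) (by omega)]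
  split_ifs <;> omega

theorem Bbet_card_general (n p : ℤ) (hn : 3 < n) (hp : p = 4 * n - 1) :
    ({k : ℤ | n + 3 ≤ k ∧ k ≤ 2 * n ∧ k - n - 2 ≤ (k - 1) ^ 2 % p ∧
        (k - 1) ^ 2 % p < 3 * n - k - 1}.ncard : ℤ) = (n ^ 2 - 4 * n + 5) / p := by
  subst hp
  have hp : 4 * n - 1 ≠ 0 := by omega
  have hset : {k : ℤ | n + 3 ≤ k ∧ k ≤ 2 * n ∧ k - n - 2 ≤ (k - 1) ^ 2 % (4 * n - 1) ∧
        (k - 1) ^ 2 % (4 * n - 1) < 3 * n - k - 1} =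
      {k ∈ Ioc (n + 2) (2 * n) | k - n - 2 ≤ (k - 1) ^ 2 % (4 * n - 1) ∧
        (k - 1) ^ 2 % (4 * n - 1) < 3 * n - k - 1} := by
    ext k
    simp only [Set.mem_ofPred_eq, coe_filter, mem_Ioc]
    omega
  rw [hset, Set.ncard_coe_finset, natCast_card_filter,
    ← sum_congr rfl fun k hk ↦ floorPotential_sub_eq_ite (mem_Ioc.1 hk).1.le (mem_Ioc.1 hk).2,
    sum_Ioc_sub_telescope _ (by omega)]
  have h₀ : (n + 2) ^ 2 - (n + 2) + (n + 1) = (n ^ 2 - 4 * n + 5) + 2 * (4 * n - 1) := by ring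
  have h₁ : (2 * n) ^ 2 - 2 * n + (n + 1) = 1 + n * (4 * n - 1) := by ring
  simp only [floorPotential, h₀, h₁, Int.add_mul_ediv_right _ _ hp,
    Int.ediv_eq_zero_of_lt (show (0 : ℤ) ≤ 1 by norm_num) (show 1 < 4 * n - 1 by omega)]
  ring

theorem Bbet_card (n p : ℤ) (hn : 3 < n) (hp : p = 4 * n - 1)
    (hprime : Prime p) :
    ({k : ℤ | n + 3 ≤ k ∧ k ≤ 2 * n ∧ k - n - 2 ≤ (k - 1) ^ 2 % p ∧
        (k - 1) ^ 2 % p < 3 * n - k - 1}.ncard : ℤ) = (n ^ 2 - 4 * n + 5) / p :=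
  Bbet_card_general n p hn hp
end

section
/- Let p = 4n-1 be prime with n > 3. Then |{k ∈ ℤ : 2 ≤ k ≤ 4n-1 and Γ(k) ≥ p}| = 2n - 2, where Γ(k) = r_p((k-1)^2) + r_p(k+1-3n). -/
/-!
`Γ(k) ≥ p` says exactly that adding the residues of `(k - 1)²` and `k + 1 - 3n` carries, so
`p · #jumps = ∑ r((k - 1)²) + ∑ r(k + 1 - 3n) - ∑ r((k - 1)² + k + 1 - 3n)`. Adjoining `k = 1`, which
never carries, makes the range a complete residue system, over which each sum is shift-invariant.
Since `(k - 1)² + k + 1 - 3n ≡ (k - 2n)² + 1` and `-1` is a non-residue modulo `p ≡ 3 (mod 4)`, the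
first and last sums differ by exactly `p`, while the middle one is `p (p - 1) / 2`.
Hence `#jumps = (p - 3) / 2 = 2n - 2`.
-/

open Finset

namespace ZMod

variable {q : ℕ}

theorem val_add_val_eq_val_add_ite [NeZero q] (a b : ZMod q) :
    a.val + b.val = (a + b).val + if q ≤ a.val + b.val then q else 0 := by
  split_ifs with h
  · exact val_add_val_of_le h
  · rw [val_add_of_lt (not_le.mp h), add_zero]

theorem sum_val_add_sum_val {α : Type*} [Fintype α] [NeZero q] (f g : α → ZMod q) :
    ∑ x, (f x).val + ∑ x, (g x).val =
      ∑ x, (f x + g x).val + q * #{x | q ≤ (f x).val + (g x).val} := by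
  rw [← sum_add_distrib, sum_congr rfl fun x _ ↦ val_add_val_eq_val_add_ite (f x) (g x),
    sum_add_distrib, sum_ite, sum_const, sum_const_zero, smul_eq_mul, add_zero, mul_comm]

theorem two_mul_sum_val [NeZero q] : 2 * ∑ x : ZMod q, x.val = q * (q - 1) := by
  obtain ⟨m, rfl⟩ := Nat.exists_eq_add_one_of_ne_zero (NeZero.ne q)
  rw [mul_comm, ← sum_range_id_mul_two]
  exact congrArg (· * 2) (Fin.sum_univ_eq_sum_range id (m + 1))

theorem val_add_one_of_ne_neg_one [Fact (1 < q)] {y : ZMod q} (hy : y ≠ -1) :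
    (y + 1).val = y.val + 1 := by
  rw [val_add, val_one]
  refine Nat.mod_eq_of_lt (lt_of_le_of_ne (val_lt y) fun h ↦ hy ?_)
  rw [eq_neg_iff_add_eq_zero, ← val_eq_zero, val_add, val_one, h, Nat.mod_self]

theorem val_sq_add_one [Fact q.Prime] (hq : q % 4 = 3) (x : ZMod q) :
    (x ^ 2 + 1).val = (x ^ 2).val + 1 :=
  val_add_one_of_ne_neg_one fun h ↦ mod_four_ne_three_of_sq_eq_neg_one h hq

theorem two_mul_card_carry_sq_add [Fact q.Prime] (hq : q % 4 = 3) (s t u : ZMod q)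
    (h : ∀ x, (x + s) ^ 2 + (x + t) = (x + u) ^ 2 + 1) :
    2 * #{x : ZMod q | q ≤ ((x + s) ^ 2).val + (x + t).val} + 3 = q := by
  have shift (c : ZMod q) (F : ZMod q → ℕ) : ∑ x, F (x + c) = ∑ x, F x :=
    Equiv.sum_comp (Equiv.addRight c) F
  have hf : ∑ x, ((x + s) ^ 2).val = ∑ x : ZMod q, (x ^ 2).val := shift s fun y ↦ (y ^ 2).val
  have hg : ∑ x, (x + t).val = ∑ x : ZMod q, x.val := shift t val
  have hfg : ∑ x, ((x + s) ^ 2 + (x + t)).val = ∑ x : ZMod q, (x ^ 2).val + q := by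
    simp only [h, val_sq_add_one hq, sum_add_distrib, sum_const, card_univ, ZMod.card, smul_eq_mul,
      mul_one]
    rw [shift u fun y ↦ (y ^ 2).val]
  have key := sum_val_add_sum_val (fun x : ZMod q ↦ (x + s) ^ 2) (fun x ↦ x + t)
  rw [hf, hg, hfg] at key
  have gauss := two_mul_sum_val (q := q)
  have hq0 : 0 < q := (Fact.out : q.Prime).pos
  refine Nat.eq_of_mul_eq_mul_left hq0 ?_
  obtain ⟨m, rfl⟩ := Nat.exists_eq_add_one_of_ne_zero hq0.ne'
  simp only [add_tsub_cancel_right] at gauss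
  nlinarith

theorem ncard_setOf_intCast_Ico [NeZero q] (P : ZMod q → Prop) [DecidablePred P] (a : ℤ) :
    {k : ℤ | a ≤ k ∧ k < a + q ∧ P k}.ncard = #{x | P x} := by
  rw [← Set.ncard_coe_finset, coe_filter_univ, eq_comm]
  refine Set.ncard_congr (fun x _ ↦ a + ((x - a).val : ℤ)) ?_ ?_ ?_
  · intro x hx
    have hcast : ((a + ((x - a).val : ℤ) : ℤ) : ZMod q) = x := by
      rw [Int.cast_add, Int.cast_natCast, natCast_zmod_val, add_sub_cancel]
    refine ⟨by omega, by have := val_lt (x - a : ZMod q); omega, ?_⟩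
    rw [hcast]
    exact hx
  · intro x y _ _ hxy
    simpa using val_injective q (by omega : (x - a).val = (y - a).val)
  · rintro k ⟨hak, hka, hk⟩
    refine ⟨k, hk, ?_⟩
    rw [← Int.cast_sub, val_intCast, Int.emod_eq_of_lt (by omega) (by omega)]
    ring

end ZMod

theorem setOf_jump_eq (n : ℤ) (q : ℕ) [NeZero q] (hq : (q : ℤ) = 4 * n - 1) :
    {k : ℤ | 2 ≤ k ∧ k ≤ 4 * n - 1 ∧ (q : ℤ) ≤ (k - 1) ^ 2 % q + (k + 1 - 3 * n) % q} =
      {k : ℤ | 1 ≤ k ∧ k < 1 + q ∧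
        q ≤ (((k : ZMod q) + -1) ^ 2).val + ((k : ZMod q) + (1 - 3 * n)).val} := by
  ext k
  have hres : (k - 1) ^ 2 % q + (k + 1 - 3 * n) % q =
      (((((k : ZMod q) + -1) ^ 2).val + ((k : ZMod q) + (1 - 3 * n)).val : ℕ) : ℤ) := by
    rw [Nat.cast_add, ← ZMod.val_intCast, ← ZMod.val_intCast]
    push_cast
    ring_nf
  simp only [Set.mem_ofPred_eq, hres, Nat.cast_le]
  constructor
  · rintro ⟨h2, hk, hc⟩
    exact ⟨by omega, by omega, hc⟩
  · rintro ⟨h1, hk, hc⟩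
    refine ⟨?_, by omega, hc⟩
    by_contra h
    obtain rfl : k = 1 := by omega
    have := ZMod.val_lt ((1 : ZMod q) + (1 - 3 * (n : ZMod q)))
    simp only [Int.cast_one, add_neg_cancel, ne_eq, OfNat.ofNat_ne_zero, not_false_eq_true,
      zero_pow, ZMod.val_zero, zero_add] at hc
    omega

theorem total_jumps_count (n p : ℤ) (hn : 3 < n) (hp : p = 4 * n - 1)
    (hprime : Prime p) :
    ({k : ℤ | 2 ≤ k ∧ k ≤ 4 * n - 1 ∧
        p ≤ (k - 1) ^ 2 % p + (k + 1 - 3 * n) % p}.ncard : ℤ) = 2 * n - 2 := by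
  lift p to ℕ using (by omega) with q
  have : Fact q.Prime := ⟨Int.prime_iff_natAbs_prime.mp hprime⟩
  have hq0 : ((4 * n - 1 : ℤ) : ZMod q) = 0 := by rw [← hp, Int.cast_natCast, ZMod.natCast_self]
  push_cast at hq0
  have hcarry := ZMod.two_mul_card_carry_sq_add (q := q) (by omega) (-1) (1 - 3 * n) (-(2 * n))
    fun x ↦ by linear_combination (x - n - 1) * hq0
  rw [setOf_jump_eq n q hp, ZMod.ncard_setOf_intCast_Ico
    (fun x : ZMod q ↦ q ≤ ((x + -1) ^ (2 : ℕ)).val + (x + (1 - 3 * n)).val)]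
  omega
end

section
/- Let p = 4n-1 be prime with n > 3. Then |{k ∈ ℤ : 2 ≤ k ≤ 2n and Γ(k) ≥ p}| = n and |{k ∈ ℤ : 2n+1 ≤ k ≤ 4n and Γ(k) ≥ p}| = n - 2, where Γ(k) = r_p((k-1)^2) + r_p(k+1-3n). -/
/-!
For `0 < p`, `p ≤ a % p + b % p` says that adding the residues carries, and then
`a % p + b % p - (a + b) % p = p`. So `p` times the number of `k ∈ I` with `Γ(k) ≥ p` is
`∑ r((k-1)²) + ∑ r(k+1-3n) - ∑ r((k-1)² + k+1-3n)`, sums over `I`. Modulo `p = 4n - 1` we have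
`(k-1)² + (k+1-3n) ≡ (k-2n)² + 1`, and as `-1` is not a square modulo `p ≡ 3 (mod 4)` the last
residue is `r((k-2n)²) + 1`. After reflecting or shifting the index, both sums of residues of
squares over a half run over `j² % p` for the same `j` up to one end point, so the unknown sum of
quadratic residues cancels and only arithmetic series remain.
-/

open Finset

namespace Int

theorem add_emod_add_ite {c : ℤ} (hc : 0 < c) (a b : ℤ) :
    (a + b) % c + (if c ≤ a % c + b % c then c else 0) = a % c + b % c := by
  have ha := emod_nonneg a hc.ne'
  have hb := emod_nonneg b hc.ne'
  have ha' := emod_lt_of_pos a hc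
  have hb' := emod_lt_of_pos b hc
  rw [add_emod]
  split_ifs with h
  · rw [((Int.ediv_emod_unique (r := a % c + b % c - c) (q := 1) hc).mpr
      ⟨by ring, by omega, by omega⟩).2]
    ring
  · rw [emod_eq_of_lt (by omega) (by omega), add_zero]

theorem emod_sq_add_one {p : ℤ} (hp : Prime p) (hp0 : 0 < p) (hp4 : p % 4 = 3) (a : ℤ) :
    (a ^ 2 + 1) % p = a ^ 2 % p + 1 := by
  have hndvd : ¬ p ∣ a ^ 2 + 1 := by
    lift p to ℕ using hp0.le
    have : Fact p.Prime := ⟨prime_iff_natAbs_prime.mp hp⟩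
    intro hdvd
    have hzero : ((a ^ 2 + 1 : ℤ) : ZMod p) = 0 :=
      (ZMod.intCast_zmod_eq_zero_iff_dvd _ p).mpr hdvd
    push_cast at hzero
    exact ZMod.exists_sq_eq_neg_one_iff.mp ⟨(a : ZMod p), by linear_combination -hzero⟩ (by omega)
  have hlt := emod_lt_of_pos (a ^ 2) hp0
  have hne : a ^ 2 % p + 1 ≠ p := fun h ↦
    hndvd (dvd_of_emod_eq_zero (by rw [← emod_add_emod, h, emod_self]))
  rw [← emod_add_emod, emod_eq_of_lt (by linarith [emod_nonneg (a ^ 2) hp0.ne']) (by omega)]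

end Int

namespace Finset

section

variable {M : Type*} [AddCommMonoid M]

theorem sum_Icc_comp_sub (f : ℤ → M) (a b c : ℤ) :
    ∑ k ∈ Icc a b, f (k - c) = ∑ k ∈ Icc (a - c) (b - c), f k := by
  simp_rw [sub_eq_add_neg, ← map_add_right_Icc, sum_map]
  rfl

theorem sum_Icc_comp_const_sub (f : ℤ → M) (a b c : ℤ) :
    ∑ k ∈ Icc a b, f (c - k) = ∑ k ∈ Icc (c - b) (c - a), f k := by
  refine sum_nbij' (c - ·) (c - ·) ?_ ?_ ?_ ?_ ?_
  all_goals intro k hk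
  all_goals simp only [mem_Icc, sub_sub_cancel] at hk ⊢
  all_goals omega

theorem sum_Icc_add_sum_Icc (f : ℤ → M) {a m b : ℤ} (h₁ : a ≤ m + 1) (h₂ : m ≤ b) :
    ∑ k ∈ Icc a m, f k + ∑ k ∈ Icc (m + 1) b, f k = ∑ k ∈ Icc a b, f k := by
  rw [← sum_union]
  · congr 1
    ext k
    simp only [mem_union, mem_Icc]
    omega
  · exact disjoint_left.mpr fun k hk hk' ↦ by simp only [mem_Icc] at hk hk'; omega

end

theorem sum_Icc_add_one_sub_sum_Icc_sub_one {G : Type*} [AddCommGroup G] (f : ℤ → G) {a b : ℤ}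
    (h : a ≤ b) :
    ∑ k ∈ Icc (a + 1) b, f k - ∑ k ∈ Icc a (b - 1), f k = f b - f a := by
  have hfirst := sum_insert (f := f) (s := Icc (a + 1) b) (a := a) (by simp)
  have hlast := sum_insert (f := f) (s := Icc a (b - 1)) (a := b) (by simp)
  rw [insert_Icc_add_one_left_eq_Icc h] at hfirst
  rw [insert_Icc_sub_one_right_eq_Icc h] at hlast
  rw [eq_sub_iff_add_eq, sub_add_eq_add_sub, sub_eq_iff_eq_add, ← hlast, hfirst, add_comm]

theorem sum_Icc_id_mul_two {a b : ℤ} (h : a ≤ b + 1) :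
    (∑ k ∈ Icc a b, k) * 2 = (b + 1 - a) * (a + b) := by
  have hrefl := sum_Icc_comp_const_sub id a b (a + b)
  simp only [id, add_sub_cancel_right, add_sub_cancel_left] at hrefl
  rw [← Int.card_Icc_of_le a b h, mul_two]
  nth_rewrite 2 [← hrefl]
  rw [← sum_add_distrib]
  simp

theorem card_filter_le_emod_add_emod_mul {ι : Type*} (s : Finset ι) (f g : ι → ℤ) {p : ℤ}
    (hp : 0 < p) :
    (#{i ∈ s | p ≤ f i % p + g i % p} : ℤ) * p =
      ∑ i ∈ s, (f i % p + g i % p - (f i + g i) % p) := by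
  rw [card_filter, Nat.cast_sum, sum_mul]
  refine sum_congr rfl fun i _ ↦ ?_
  refine eq_sub_of_add_eq' ?_
  convert Int.add_emod_add_ite hp (f i) (g i) using 2
  split_ifs <;> simp

end Finset

section Jumps

def jumps (n p : ℤ) (s : Finset ℤ) : Finset ℤ :=
  {k ∈ s | p ≤ (k - 1) ^ 2 % p + (k + 1 - 3 * n) % p}

variable {n p : ℤ}

theorem ncard_setOf_jump (a b : ℤ) :
    {k : ℤ | a ≤ k ∧ k ≤ b ∧ p ≤ (k - 1) ^ 2 % p + (k + 1 - 3 * n) % p}.ncard =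
      #(jumps n p (Icc a b)) := by
  rw [← Set.ncard_coe_finset, jumps, coe_filter]
  simp only [mem_Icc, and_assoc]

theorem card_jumps_mul (hn : 0 < n) (hp : p = 4 * n - 1) (hprime : Prime p) (s : Finset ℤ) :
    (#(jumps n p s) : ℤ) * p =
      ∑ k ∈ s, (k - 1) ^ 2 % p - ∑ k ∈ s, (k - 2 * n) ^ 2 % p +
        ∑ k ∈ s, (k + 1 - 3 * n) % p - #s := by
  have hp0 : 0 < p := by omega
  have hsum (k : ℤ) : ((k - 1) ^ 2 + (k + 1 - 3 * n)) % p = (k - 2 * n) ^ 2 % p + 1 := by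
    rw [← Int.emod_sq_add_one hprime hp0 (by omega),
      show (k - 1) ^ 2 + (k + 1 - 3 * n) = (k - 2 * n) ^ 2 + 1 + p * (k - n - 1) by rw [hp]; ring,
      Int.add_mul_emod_self_left]
  rw [jumps, card_filter_le_emod_add_emod_mul s _ _ hp0]
  simp only [hsum, sum_sub_distrib, sum_add_distrib, sum_const, nsmul_eq_mul, mul_one]
  ring

theorem card_jumps_Icc_two (hn : 1 < n) (hp : p = 4 * n - 1) (hprime : Prime p) :
    (#(jumps n p (Icc 2 (2 * n))) : ℤ) = n := by
  have hp0 : 0 < p := by omega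
  have hsq : ∑ k ∈ Icc 2 (2 * n), (k - 1) ^ 2 % p - ∑ k ∈ Icc 2 (2 * n), (k - 2 * n) ^ 2 % p
      = n := by
    have hshift : ∑ k ∈ Icc 2 (2 * n), (k - 1) ^ 2 % p =
        ∑ j ∈ Icc (0 + 1) (2 * n - 1), j ^ 2 % p := by
      rw [sum_Icc_comp_sub (fun j ↦ j ^ 2 % p)]; norm_num
    have hrefl : ∑ k ∈ Icc 2 (2 * n), (k - 2 * n) ^ 2 % p =
        ∑ j ∈ Icc 0 (2 * n - 1 - 1), j ^ 2 % p := by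
      simp_rw [← neg_sub (2 * n), neg_sq]
      rw [sum_Icc_comp_const_sub (fun j ↦ j ^ 2 % p)]; ring_nf
    rw [hshift, hrefl, sum_Icc_add_one_sub_sum_Icc_sub_one (fun j ↦ j ^ 2 % p) (by omega),
      ((Int.ediv_emod_unique (r := n) (q := n - 1) hp0).mpr
        ⟨by rw [hp]; ring, by omega, by omega⟩).2]
    simp
  have hlin : ∑ k ∈ Icc 2 (2 * n), (k + 1 - 3 * n) % p = 4 * n ^ 2 - 1 := by
    have hres : ∀ k ∈ Icc 2 (2 * n), (k + 1 - 3 * n) % p = k + n := fun k hk ↦ by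
      rw [mem_Icc] at hk
      exact ((Int.ediv_emod_unique (q := -1) hp0).mpr ⟨by rw [hp]; ring, by omega, by omega⟩).2
    have hgauss := sum_Icc_id_mul_two (a := 2) (b := 2 * n) (by omega)
    rw [sum_congr rfl hres, sum_add_distrib, sum_const, nsmul_eq_mul,
      Int.card_Icc_of_le _ _ (by omega)]
    linarith
  have hcard : (#(Icc 2 (2 * n)) : ℤ) = 2 * n - 1 := by
    rw [Int.card_Icc_of_le _ _ (by omega)]; ring
  have hcount := card_jumps_mul (by omega) hp hprime (Icc 2 (2 * n))
  refine mul_right_cancel₀ hp0.ne' ?_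
  rw [hcount, hsq, hlin, hcard, hp]
  ring

theorem card_jumps_Icc_two_mul_add_one (hn : 1 < n) (hp : p = 4 * n - 1) (hprime : Prime p) :
    (#(jumps n p (Icc (2 * n + 1) (4 * n))) : ℤ) = n - 2 := by
  have hp0 : 0 < p := by omega
  have hsq : ∑ k ∈ Icc (2 * n + 1) (4 * n), (k - 1) ^ 2 % p -
      ∑ k ∈ Icc (2 * n + 1) (4 * n), (k - 2 * n) ^ 2 % p = -n := by
    have hrefl : ∑ k ∈ Icc (2 * n + 1) (4 * n), (k - 1) ^ 2 % p =
        ∑ j ∈ Icc 0 (2 * n - 1), j ^ 2 % p := by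
      have hsymm (k : ℤ) : (k - 1) ^ 2 % p = (4 * n - k) ^ 2 % p := by
        rw [show (k - 1) ^ 2 = (4 * n - k) ^ 2 + p * (2 * k - 4 * n - 1) by rw [hp]; ring,
          Int.add_mul_emod_self_left]
      simp_rw [hsymm]
      rw [sum_Icc_comp_const_sub (fun j ↦ j ^ 2 % p)]; ring_nf
    have hshift : ∑ k ∈ Icc (2 * n + 1) (4 * n), (k - 2 * n) ^ 2 % p =
        ∑ j ∈ Icc (0 + 1) (2 * n), j ^ 2 % p := by
      rw [sum_Icc_comp_sub (fun j ↦ j ^ 2 % p)]; ring_nf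
    rw [hrefl, hshift, ← neg_sub,
      sum_Icc_add_one_sub_sum_Icc_sub_one (fun j ↦ j ^ 2 % p) (by omega),
      ((Int.ediv_emod_unique (r := n) (q := n) hp0).mpr ⟨by rw [hp]; ring, by omega, by omega⟩).2]
    simp
  have hlin : ∑ k ∈ Icc (2 * n + 1) (4 * n), (k + 1 - 3 * n) % p = 3 * n + (n - 2) * p := by
    have hwrap : ∀ k ∈ Icc (2 * n + 1) (3 * n - 2), (k + 1 - 3 * n) % p = k + n := fun k hk ↦ by
      rw [mem_Icc] at hk
      exact ((Int.ediv_emod_unique (q := -1) hp0).mpr ⟨by rw [hp]; ring, by omega, by omega⟩).2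
    have hnowrap : ∀ k ∈ Icc (3 * n - 2 + 1) (4 * n), (k + 1 - 3 * n) % p = k + (1 - 3 * n) :=
      fun k hk ↦ by
        rw [mem_Icc] at hk
        exact ((Int.ediv_emod_unique (q := 0) hp0).mpr ⟨by ring, by omega, by omega⟩).2
    have hlow := sum_Icc_id_mul_two (a := 2 * n + 1) (b := 3 * n - 2) (by omega)
    have hhigh := sum_Icc_id_mul_two (a := 3 * n - 2 + 1) (b := 4 * n) (by omega)
    rw [← sum_Icc_add_sum_Icc _ (m := 3 * n - 2) (by omega) (by omega), sum_congr rfl hwrap,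
      sum_congr rfl hnowrap, sum_add_distrib, sum_add_distrib, sum_const, sum_const,
      nsmul_eq_mul, nsmul_eq_mul, Int.card_Icc_of_le _ _ (by omega),
      Int.card_Icc_of_le _ _ (by omega), hp]
    linarith
  have hcard : (#(Icc (2 * n + 1) (4 * n)) : ℤ) = 2 * n := by
    rw [Int.card_Icc_of_le _ _ (by omega)]; ring
  have hcount := card_jumps_mul (by omega) hp hprime (Icc (2 * n + 1) (4 * n))
  refine mul_right_cancel₀ hp0.ne' ?_
  rw [hcount, hsq, hlin, hcard]
  ring

end Jumps

theorem jumps_count_halves (n p : ℤ) (hn : 3 < n) (hp : p = 4 * n - 1)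
    (hprime : Prime p) :
    ({k : ℤ | 2 ≤ k ∧ k ≤ 2 * n ∧
        p ≤ (k - 1) ^ 2 % p + (k + 1 - 3 * n) % p}.ncard : ℤ) = n ∧
    ({k : ℤ | 2 * n + 1 ≤ k ∧ k ≤ 4 * n ∧
        p ≤ (k - 1) ^ 2 % p + (k + 1 - 3 * n) % p}.ncard : ℤ) = n - 2 := by
  rw [ncard_setOf_jump, ncard_setOf_jump]
  exact ⟨card_jumps_Icc_two (by omega) hp hprime,
    card_jumps_Icc_two_mul_add_one (by omega) hp hprime⟩
end

section
/- Let p = 4n-1 be prime with n > 3. Then ∑_{k=1}^{p-1} r_p(k^2 - k + 2 - 3n) = ∑_{k=1}^{p-1} r_p(k^2) + 3n - 2. -/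
/-!
Since `p = 4n - 1`, the polynomial `k² - k + 2 - 3n` is congruent to `(k - 2n)² + 1` modulo `p`.
Over a full residue system the shift `k ↦ k - 2n` is harmless, and because `p ≡ 3 (mod 4)` the
value `-1` is not a square, so `r_p(j² + 1) = r_p(j²) + 1` for every `j`. The sum over
`0 ≤ k < p` therefore exceeds `∑ r_p(j²)` by exactly `p`, and removing the term `k = 0`, where
`r_p(4n² + 1) = n + 1`, leaves the excess `p - (n + 1) = 3n - 2`.
-/

open Finset

theorem Function.Periodic.sum_Ico_zero_comp_add {M : Type*} [AddCommMonoid M] {f : ℤ → M}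
    {p : ℤ} (hf : Function.Periodic f p) (c : ℤ) :
    ∑ k ∈ Ico 0 p, f (k + c) = ∑ k ∈ Ico 0 p, f k := by
  rcases le_or_gt p 0 with hp | hp
  · simp [Ico_eq_empty_of_le hp]
  have hf_emod (x : ℤ) : f (x % p) = f x := by
    simpa [Int.emod_def, mul_comm] using (hf.zsmul (x / p)).sub_eq x
  have h_mem (x : ℤ) : x % p ∈ Ico 0 p :=
    mem_Ico.2 ⟨Int.emod_nonneg _ hp.ne', Int.emod_lt_of_pos _ hp⟩
  refine sum_nbij' (fun k => (k + c) % p) (fun k => (k - c) % p) (fun k _ => h_mem _)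
    (fun k _ => h_mem _) (fun k hk => ?_) (fun k hk => ?_) (fun k _ => (hf_emod _).symm)
  · rw [mem_Ico] at hk
    rw [Int.emod_sub_emod, add_sub_cancel_right, Int.emod_eq_of_lt hk.1 hk.2]
  · rw [mem_Ico] at hk
    rw [Int.emod_add_emod, sub_add_cancel, Int.emod_eq_of_lt hk.1 hk.2]

theorem Int.add_one_emod_of_not_dvd {a p : ℤ} (hp : 0 < p) (h : ¬p ∣ a + 1) :
    (a + 1) % p = a % p + 1 := by
  have h_lt : a % p + 1 < p := by
    refine lt_of_le_of_ne (Int.emod_lt_of_pos a hp) fun h_eq => h ?_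
    rw [Int.dvd_iff_emod_eq_zero, ← Int.emod_add_emod, h_eq, Int.emod_self]
  rw [← Int.emod_add_emod, Int.emod_eq_of_lt (by have := Int.emod_nonneg a hp.ne'; omega) h_lt]

theorem Int.not_natCast_dvd_sq_add_one {p : ℕ} [Fact p.Prime] (hp : p % 4 = 3) (j : ℤ) :
    ¬(p : ℤ) ∣ j ^ 2 + 1 := by
  rw [← ZMod.intCast_zmod_eq_zero_iff_dvd]
  push_cast
  intro h
  exact ZMod.exists_sq_eq_neg_one_iff.mp ⟨j, by linear_combination -h⟩ hp

theorem Int.sum_Icc_one_sub_one_eq_sum_Ico_zero_sub {M : Type*} [AddCommGroup M] {f : ℤ → M}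
    {p : ℤ} (hp : 0 < p) :
    ∑ k ∈ Icc 1 (p - 1), f k = ∑ k ∈ Ico 0 p, f k - f 0 := by
  rw [Ico_eq_cons_Ioo hp, sum_cons, add_sub_cancel_left]
  congr 1
  ext k
  simp only [mem_Icc, mem_Ioo]
  omega

theorem sum_residues_full (n p : ℤ) (hn : 3 < n) (hp : p = 4 * n - 1)
    (hprime : Prime p) :
    ∑ k ∈ Finset.Icc (1 : ℤ) (p - 1), (k ^ 2 - k + 2 - 3 * n) % p =
      (∑ k ∈ Finset.Icc (1 : ℤ) (p - 1), k ^ 2 % p) + 3 * n - 2 := by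
  obtain ⟨q, rfl⟩ : ∃ q : ℕ, p = q := ⟨p.toNat, by omega⟩
  have : Fact q.Prime := ⟨Nat.prime_iff_prime_int.mpr hprime⟩
  have hq : (0 : ℤ) < q := by omega
  set g : ℤ → ℤ := fun j => (j ^ 2 + 1) % q with hg_def
  have hg : g.Periodic q := fun j => by
    simp only [hg_def, show (j + q) ^ 2 + 1 = j ^ 2 + 1 + q * (2 * j + q) by ring,
      Int.add_mul_emod_self_left]
  have h_shift (k : ℤ) : (k ^ 2 - k + 2 - 3 * n) % q = g (k + -(2 * n)) := by
    simp only [hg_def, show k ^ 2 - k + 2 - 3 * n = (k + -(2 * n)) ^ 2 + 1 + q * (k - n - 1) by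
      rw [hp]; ring, Int.add_mul_emod_self_left]
  have h_zero : g (0 + -(2 * n)) = n + 1 := by
    simp only [hg_def, show (0 + -(2 * n)) ^ 2 + 1 = n + 1 + q * n by rw [hp]; ring,
      Int.add_mul_emod_self_left]
    exact Int.emod_eq_of_lt (by omega) (by omega)
  have h_sq (j : ℤ) : g j = j ^ 2 % q + 1 :=
    Int.add_one_emod_of_not_dvd hq (Int.not_natCast_dvd_sq_add_one (by omega) j)
  calc ∑ k ∈ Icc 1 ((q : ℤ) - 1), (k ^ 2 - k + 2 - 3 * n) % q
      = ∑ k ∈ Ico 0 (q : ℤ), g (k + -(2 * n)) - (n + 1) := by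
        rw [sum_congr rfl fun k _ => h_shift k, Int.sum_Icc_one_sub_one_eq_sum_Ico_zero_sub hq,
          h_zero]
    _ = ∑ k ∈ Ico 0 (q : ℤ), k ^ 2 % q + q - (n + 1) := by
        rw [hg.sum_Ico_zero_comp_add, sum_congr rfl fun j _ => h_sq j, sum_add_distrib]
        simp
    _ = _ := by
        rw [Int.sum_Icc_one_sub_one_eq_sum_Ico_zero_sub hq, zero_pow two_ne_zero, Int.zero_emod]
        omega
end

section
/- Let p = 4n-1 be prime with n > 3. Then ∑_{k=1}^{p-1} ⌊(k^2 - k + 2 - 3n)/p⌋ = (p(p-5) + 6 - n)/3 - (1/p)·∑_{k=1}^{p-1} r_p(k^2). -/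
/-!
Since `2 * (2n) ≡ 1 [ZMOD p]`, completing the square gives
`k² - k + 2 - 3n ≡ (k - 2n)² + 1 [ZMOD p]`. As `p ≡ 3 [ZMOD 4]`, `-1` is not a square mod `p`,
so the remainder of `(k - 2n)² + 1` is the remainder of `(k - 2n)²` plus one. Over a full residue
system the remainders of `(k - 2n)²` and of `k²` have the same sum; removing `k = 0`, where
`(2n)² = n p + n` leaves remainder `n`, expresses the sum of remainders of `k² - k + 2 - 3n` through
`∑ r_p(k²)`. Writing `⌊a / p⌋ = (a - r_p(a)) / p` and summing the polynomial in closed form finishes.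
-/

open Finset

namespace Int

theorem sum_Ico_emod_add {M : Type*} [AddCommMonoid M] {p : ℤ} (hp : 0 < p) (c : ℤ)
    (f : ℤ → M) : ∑ k ∈ Ico 0 p, f ((k + c) % p) = ∑ k ∈ Ico 0 p, f k := by
  have hmem : ∀ x, x % p ∈ Ico 0 p := fun x =>
    mem_Ico.mpr ⟨emod_nonneg x hp.ne', emod_lt_of_pos x hp⟩
  have hcancel : ∀ k ∈ Ico 0 p, ∀ d e, d + e = 0 → ((k + d) % p + e) % p = k := by
    intro k hk d e hde
    rw [emod_add_emod, add_assoc, hde, add_zero,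
      emod_eq_of_lt (mem_Ico.mp hk).1 (mem_Ico.mp hk).2]
  exact sum_nbij' (fun k => (k + c) % p) (fun k => (k + -c) % p) (fun k _ => hmem _)
    (fun k _ => hmem _) (fun k hk => hcancel k hk c (-c) (add_neg_cancel c))
    (fun k hk => hcancel k hk (-c) c (neg_add_cancel c)) (fun _ _ => rfl)

theorem sum_Ico_zero_eq_add_sum_Icc {M : Type*} [AddCommMonoid M] {p : ℤ} (hp : 0 < p)
    (f : ℤ → M) : ∑ k ∈ Ico 0 p, f k = f 0 + ∑ k ∈ Icc 1 (p - 1), f k := by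
  rw [← insert_Ico_add_one_left_eq_Ico hp, sum_insert (by simp), zero_add,
    Icc_sub_one_right_eq_Ico]

theorem mul_sum_ediv {ι : Type*} (s : Finset ι) (f : ι → ℤ) (p : ℤ) :
    p * ∑ i ∈ s, f i / p = ∑ i ∈ s, f i - ∑ i ∈ s, f i % p := by
  rw [mul_sum, ← sum_sub_distrib]
  exact sum_congr rfl fun i _ => by rw [emod_def]; ring

theorem add_one_emod_of_not_dvd_s16 {a p : ℤ} (hp : 0 < p) (h : ¬ p ∣ a + 1) :
    (a + 1) % p = a % p + 1 := by
  have hne : a % p ≠ p - 1 := fun he =>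
    h (by rw [dvd_iff_emod_eq_zero, ← emod_add_emod, he, sub_add_cancel, emod_self])
  rw [← emod_add_emod, emod_eq_of_lt (by have := emod_nonneg a hp.ne'; omega)
    (by have := emod_lt_of_pos a hp; omega)]

theorem not_dvd_sq_add_one_of_emod_four_eq_three {p : ℤ} (hp : Prime p) (hp0 : 0 < p)
    (hp4 : p % 4 = 3) (x : ℤ) : ¬ p ∣ x ^ 2 + 1 := by
  lift p to ℕ using hp0.le
  have : Fact p.Prime := ⟨Nat.prime_iff_prime_int.mpr hp⟩
  intro hdvd
  have hx : (x : ZMod p) ^ 2 + 1 = 0 := by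
    exact_mod_cast (ZMod.intCast_zmod_eq_zero_iff_dvd _ p).mpr hdvd
  exact ZMod.exists_sq_eq_neg_one_iff.mp ⟨(x : ZMod p), by linear_combination -hx⟩ (by omega)

theorem three_mul_sum_Icc_sq_sub_self_add (c : ℤ) {m : ℤ} (hm : 0 ≤ m) :
    3 * ∑ k ∈ Icc 1 m, (k ^ 2 - k + c) = (m - 1) * m * (m + 1) + 3 * m * c := by
  induction m, hm using Int.leInduction with
  | base => simp
  | succ m hm ih =>
    rw [← insert_Icc_right_eq_Icc_add_one (by omega), sum_insert (by simp), mul_add, ih]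
    ring

end Int

open Int

section

variable {n p : ℤ}

theorem sum_Icc_sub_two_mul_sq_emod (hn : 0 < n) (hp : p = 4 * n - 1) :
    ∑ k ∈ Icc 1 (p - 1), (k - 2 * n) ^ 2 % p = ∑ k ∈ Icc 1 (p - 1), k ^ 2 % p - n := by
  have hp0 : 0 < p := by omega
  have hshift : ∑ k ∈ Ico 0 p, (k - 2 * n) ^ 2 % p = ∑ k ∈ Ico 0 p, k ^ 2 % p := by
    rw [← sum_Ico_emod_add hp0 (-(2 * n)) (fun k => k ^ 2 % p)]
    exact sum_congr rfl fun k _ => ((mod_modEq _ p).pow 2).symm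
  have hzero : (0 - 2 * n) ^ 2 % p = n := by
    rw [show (0 - 2 * n) ^ 2 = n + p * n by rw [hp]; ring, add_mul_emod_self_left,
      emod_eq_of_lt hn.le (by omega)]
  rw [sum_Ico_zero_eq_add_sum_Icc hp0, sum_Ico_zero_eq_add_sum_Icc hp0, hzero,
    zero_pow two_ne_zero, zero_emod, zero_add] at hshift
  omega

theorem sum_Icc_sq_sub_self_add_emod (hn : 0 < n) (hp : p = 4 * n - 1) (hprime : Prime p) :
    ∑ k ∈ Icc 1 (p - 1), (k ^ 2 - k + 2 - 3 * n) % p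
      = ∑ k ∈ Icc 1 (p - 1), k ^ 2 % p - n + (p - 1) := by
  have hp0 : 0 < p := by omega
  have hterm (k : ℤ) : (k ^ 2 - k + 2 - 3 * n) % p = (k - 2 * n) ^ 2 % p + 1 := by
    have hmod : k ^ 2 - k + 2 - 3 * n ≡ (k - 2 * n) ^ 2 + 1 [ZMOD p] :=
      modEq_iff_dvd.mpr ⟨n + 1 - k, by rw [hp]; ring⟩
    rw [hmod.eq, add_one_emod_of_not_dvd_s16 hp0
      (not_dvd_sq_add_one_of_emod_four_eq_three hprime hp0 (by omega) _)]
  rw [sum_congr rfl fun k _ => hterm k, sum_add_distrib, sum_Icc_sub_two_mul_sq_emod hn hp,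
    sum_const, card_Icc, nsmul_one, toNat_of_nonneg (by omega)]
  ring

end

theorem sum_floors_full (n p : ℤ) (hn : 3 < n) (hp : p = 4 * n - 1)
    (hprime : Prime p) :
    ((∑ k ∈ Finset.Icc (1 : ℤ) (p - 1), (k ^ 2 - k + 2 - 3 * n) / p : ℤ) : ℚ) =
      ((p : ℚ) * (p - 5) + 6 - n) / 3 -
        (1 / (p : ℚ)) * ((∑ k ∈ Finset.Icc (1 : ℤ) (p - 1), k ^ 2 % p : ℤ) : ℚ) := by
  have hp0 : 0 < p := by omega
  have hpoly := three_mul_sum_Icc_sq_sub_self_add (2 - 3 * n) (show 0 ≤ p - 1 by omega)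
  simp only [← add_sub_assoc] at hpoly
  have key : 3 * (p * ∑ k ∈ Icc (1 : ℤ) (p - 1), (k ^ 2 - k + 2 - 3 * n) / p)
      = p * (p * (p - 5) + 6 - n) - 3 * ∑ k ∈ Icc (1 : ℤ) (p - 1), k ^ 2 % p := by
    rw [mul_sum_ediv, mul_sub, hpoly, sum_Icc_sq_sub_self_add_emod (by omega) hp hprime]
    linear_combination (2 * p - 3) * hp
  have hpQ : (p : ℚ) ≠ 0 := by exact_mod_cast hp0.ne'
  field_simp
  exact_mod_cast (by linear_combination key)
end

section
/- Let p = 4n-1 be prime with n > 3, M = ⌊n^2/p⌋, and Q_m = (1 + sqrt(4mp + 3p - 4))/2. Then ∑_{k=1}^{n} ⌊(k^2 - k + 2 - 3n)/p⌋ = (M-1)·n - ∑_{m=0}^{M-1} ⌊Q_m⌋. -/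
/-!
Put `x_k = k² - k + 2 - 3n`. Since `-p ≤ x_k < pM`, the floor `⌊x_k / p⌋` equals the number of
`m ∈ [0, M)` with `pm ≤ x_k`, minus one; the upper bound holds because `-1` is not a square
modulo `p ≡ 3 (mod 4)`, so `n² mod p ≠ p - 1`. Swapping the two sums, for fixed `m` the condition
`pm ≤ x_k` reads `D ≤ (2k - 1)²` with `D = 4mp + 3p - 4`. As `D + 2² = (4m + 3)p`, `D` is not a
square, so the condition is `D < (2k - 1)²`, i.e. `⌊Q_m⌋ < k`, which holds for exactly
`n - ⌊Q_m⌋` values of `k ∈ [1, n]`.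
-/

open Finset

namespace Int

lemma sum_Icc_boole_le {a b c : ℤ} (hac : a ≤ c + 1) (hcb : c ≤ b) :
    ∑ k ∈ Icc a b, (if k ≤ c then 1 else 0 : ℤ) = c + 1 - a := by
  have hfilter : (Icc a b).filter (· ≤ c) = Icc a c := by
    ext
    simp only [mem_filter, mem_Icc]
    omega
  rw [sum_boole, hfilter, card_Icc]
  omega

lemma sum_Icc_boole_lt {a b c : ℤ} (hac : a ≤ c + 1) (hcb : c ≤ b) :
    ∑ k ∈ Icc a b, (if c < k then 1 else 0 : ℤ) = b - c := by
  have hfilter : (Icc a b).filter (c < ·) = Icc (c + 1) b := by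
    ext
    simp only [mem_filter, mem_Icc]
    omega
  rw [sum_boole, hfilter, card_Icc]
  omega

lemma ediv_eq_sum_boole_sub_one {p x M : ℤ} (hp : 0 < p) (hlo : -p ≤ x) (hhi : x < p * M) :
    x / p = ∑ m ∈ Icc 0 (M - 1), (if p * m ≤ x then 1 else 0 : ℤ) - 1 := by
  have hlo' : -1 ≤ x / p := (Int.le_ediv_iff_mul_le hp).mpr (by linarith)
  have hhi' : x / p < M := (Int.ediv_lt_iff_lt_mul hp).mpr (by linarith)
  simp_rw [mul_comm p, ← Int.le_ediv_iff_mul_le hp]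
  rw [sum_Icc_boole_le (by omega) (by omega)]
  ring

lemma emod_lt_sub_one_of_not_dvd_add_one {p a : ℤ} (hp : 0 < p) (h : ¬ p ∣ a + 1) :
    a % p < p - 1 := by
  refine lt_of_le_of_ne (by linarith [emod_lt_of_pos a hp]) fun he ↦ h ?_
  exact ⟨a / p + 1, by linarith [mul_ediv_add_emod a p]⟩

lemma floor_one_add_sqrt_div_two_lt_iff {x : ℝ} {k : ℤ} (hk : 1 ≤ k) :
    ⌊(1 + √x) / 2⌋ < k ↔ x < (2 * k - 1) ^ 2 := by
  have hk' : (0 : ℝ) < 2 * k - 1 := by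
    have : (1 : ℝ) ≤ k := by exact_mod_cast hk
    linarith
  rw [floor_lt, ← Real.sqrt_lt' hk']
  constructor <;> intro h <;> linarith

lemma Prime.not_dvd_sq_add_sq {p : ℤ} (hp : Prime p) (hp0 : 0 < p) (hp4 : p % 4 = 3)
    {x y : ℤ} (hy : ¬ p ∣ y) : ¬ p ∣ x ^ 2 + y ^ 2 := by
  lift p to ℕ using hp0.le
  have : Fact p.Prime := ⟨by simpa [prime_iff_natAbs_prime] using hp⟩
  intro h
  refine ZMod.mod_four_ne_three_of_sq_eq_neg_sq' (x := (x : ZMod p)) (y := y) ?_ ?_ (by omega)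
  · rwa [Ne, ZMod.intCast_zmod_eq_zero_iff_dvd]
  · rw [← ZMod.intCast_zmod_eq_zero_iff_dvd] at h
    push_cast at h
    linear_combination h

end Int

open Int

section

variable {n p : ℤ}

lemma mul_le_sub_iff_le_sq (hp : p = 4 * n - 1) (m k : ℤ) :
    p * m ≤ k ^ 2 - k + 2 - 3 * n ↔ 4 * m * p + 3 * p - 4 ≤ (2 * k - 1) ^ 2 := by
  subst hp
  constructor <;> intro h <;> linarith

lemma sum_Icc_boole_mul_le_eq_sub_floor (hn : 0 < n) (hp : p = 4 * n - 1) (hprime : Prime p)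
    {m : ℤ} (hm : p * (m + 1) ≤ n ^ 2) :
    ∑ k ∈ Icc 1 n, (if p * m ≤ k ^ 2 - k + 2 - 3 * n then 1 else 0 : ℤ) =
      n - ⌊(1 + √((4 * m * p + 3 * p - 4 : ℤ) : ℝ)) / 2⌋ := by
  set D := 4 * m * p + 3 * p - 4
  have hD : ∀ t : ℤ, t ^ 2 ≠ D := fun t ht ↦
    hprime.not_dvd_sq_add_sq (by omega) (by omega) (y := 2)
      (fun h ↦ by have := Int.le_of_dvd two_pos h; omega) ⟨4 * m + 3, by rw [ht]; ring⟩
  have hq : ∀ k : ℤ, 1 ≤ k → (⌊(1 + √(D : ℝ)) / 2⌋ < k ↔ D < (2 * k - 1) ^ 2) := fun k hk ↦ by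
    rw [floor_one_add_sqrt_div_two_lt_iff hk]
    norm_cast
  have hq0 : 0 ≤ ⌊(1 + √(D : ℝ)) / 2⌋ := Int.floor_nonneg.mpr (by positivity)
  have hqn : ⌊(1 + √(D : ℝ)) / 2⌋ < n + 1 := (hq (n + 1) (by omega)).mpr (by linarith)
  rw [← sum_Icc_boole_lt (a := 1) (b := n) (c := ⌊(1 + √(D : ℝ)) / 2⌋) (by omega) (by omega)]
  refine sum_congr rfl fun k hk ↦ if_congr ?_ rfl rfl
  rw [mul_le_sub_iff_le_sq hp, hq k (mem_Icc.mp hk).1, (hD _).symm.le_iff_lt]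

end

theorem sum_floors_n (n p M : ℤ) (hn : 3 < n) (hp : p = 4 * n - 1)
    (hprime : Prime p) (hM : M = n ^ 2 / p) :
    ∑ k ∈ Finset.Icc (1 : ℤ) n, (k ^ 2 - k + 2 - 3 * n) / p =
      (M - 1) * n -
        ∑ m ∈ Finset.Icc (0 : ℤ) (M - 1),
          ⌊(1 + Real.sqrt ((4 * m * p + 3 * p - 4 : ℤ) : ℝ)) / 2⌋ := by
  have hp0 : 0 < p := by omega
  have hM0 : 0 ≤ M := hM ▸ ediv_nonneg (sq_nonneg n) hp0.le
  have hpM : p * M ≤ n ^ 2 := hM ▸ Int.mul_ediv_self_le hp0.ne'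
  have hMn : n ^ 2 - p + 1 < p * M := by
    have := emod_lt_sub_one_of_not_dvd_add_one hp0
      (hprime.not_dvd_sq_add_sq hp0 (by omega) hprime.not_dvd_one (x := n))
    rw [hM]
    linarith [mul_ediv_add_emod (n ^ 2) p]
  calc ∑ k ∈ Icc 1 n, (k ^ 2 - k + 2 - 3 * n) / p
      = ∑ k ∈ Icc 1 n, (∑ m ∈ Icc 0 (M - 1),
          (if p * m ≤ k ^ 2 - k + 2 - 3 * n then 1 else 0 : ℤ) - 1) := by
        refine sum_congr rfl fun k hk ↦ ediv_eq_sum_boole_sub_one hp0 ?_ ?_ <;>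
          obtain ⟨hk1, hkn⟩ := mem_Icc.mp hk <;> nlinarith
    _ = ∑ m ∈ Icc 0 (M - 1), ∑ k ∈ Icc 1 n,
          (if p * m ≤ k ^ 2 - k + 2 - 3 * n then 1 else 0 : ℤ) - n := by
        rw [sum_sub_distrib, sum_comm, sum_const, card_Icc, nsmul_eq_mul, mul_one,
          toNat_of_nonneg (by omega)]
        ring
    _ = ∑ m ∈ Icc 0 (M - 1), (n - ⌊(1 + √((4 * m * p + 3 * p - 4 : ℤ) : ℝ)) / 2⌋) - n := by
        refine congrArg (· - n) (sum_congr rfl fun m hm ↦ ?_)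
        refine sum_Icc_boole_mul_le_eq_sub_floor (by omega) hp hprime ?_
        nlinarith [(mem_Icc.mp hm).2]
    _ = _ := by
        rw [sum_sub_distrib, sum_const, card_Icc, nsmul_eq_mul, toNat_of_nonneg (by omega)]
        ring
end

section
/- Let p = 4n-1 be prime with n > 3, M = ⌊n^2/p⌋, R_m = sqrt(mp), Q_m = (1 + sqrt(4mp + 3p - 4))/2, and let J_n = |{k ∈ ℤ : 2 ≤ k ≤ n+2 and r_p((k-1)^2) + r_p(k+1-3n) ≥ p}|. Then ∑_{m=1}^{M} ⌊R_m⌋ - ∑_{m=0}^{M-1} ⌊Q_m⌋ = J_n - M - 1. -/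
/-!
Both floors count lattice points: `⌊√(mp)⌋ = #{j ≥ 1 | j² ≤ mp}` and
`⌊Q_m⌋ = #{j ≥ 1 | j² - j + n + 1 ≤ (m + 1) p}`, so exchanging the order of summation turns the
left side into `∑_{j ≤ n} (⌊(j² - j + n)/p⌋ - ⌊j²/p⌋)`. On the right, `r_p(k + 1 - 3n) = k + n`,
so the `k`-th indicator is `⌊((k-1)² + k + n)/p⌋ - ⌊(k-1)²/p⌋`; as `-1` is not a square modulo
`p ≡ 3 (mod 4)`, `p` never divides `j² + j + n + 1`, and the summand becomes
`⌊((j+1)² - (j+1) + n)/p⌋ - ⌊j²/p⌋` with `j = k - 1`. The difference of the two sums telescopes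
to `⌊((n+2)² - (n+2) + n)/p⌋ = ⌊(n² + 3)/p⌋ + 1`, which is `M + 1` because `p` divides none of
`n² + 1, n² + 2, n² + 3` (`16 (n² + c) ≡ 16 c + 1 [ZMOD p]`).
-/

open Finset

lemma Int.sum_Icc_sub {M : Type*} [AddCommGroup M] (f : ℤ → M) {a b : ℤ} (hab : a ≤ b + 1) :
    ∑ i ∈ Icc a b, (f (i + 1) - f i) = f (b + 1) - f a := by
  obtain ⟨c, rfl⟩ : ∃ c, b = c - 1 := ⟨b + 1, by ring⟩
  induction c, (show a ≤ c by omega) using Int.leInduction with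
  | base => simp [Icc_eq_empty_of_lt]
  | succ c hac ih =>
    rw [show c + 1 - 1 = c - 1 + 1 by ring, ← insert_Icc_right_eq_Icc_add_one (by omega),
      sum_insert (by simp), ih (by omega)]
    abel

lemma sum_Icc_ite_le {L U s : ℤ} (hL : L - 1 ≤ s) (hU : s ≤ U) :
    ∑ j ∈ Icc L U, (if j ≤ s then (1 : ℤ) else 0) = s + 1 - L := by
  rw [← natCast_card_filter, show {j ∈ Icc L U | j ≤ s} = Icc L s by ext; simp; omega,
    Int.card_Icc, Int.toNat_of_nonneg (by omega)]

lemma sum_Icc_ite_lt {L U t : ℤ} (hL : L - 1 ≤ t) (hU : t ≤ U) :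
    ∑ m ∈ Icc L U, (if t < m then (1 : ℤ) else 0) = U - t := by
  rw [← natCast_card_filter, show {m ∈ Icc L U | t < m} = Icc (t + 1) U by ext; simp; omega,
    Int.card_Icc, Int.toNat_of_nonneg (by omega)]
  ring

lemma sum_Icc_ite_le_mul {p a L U : ℤ} (hp : 0 < p) (hL : L - 1 ≤ (a - 1) / p)
    (hU : (a - 1) / p ≤ U) :
    ∑ m ∈ Icc L U, (if a ≤ m * p then (1 : ℤ) else 0) = U - (a - 1) / p := by
  rw [← sum_Icc_ite_lt hL hU]
  refine sum_congr rfl fun m _ => if_congr ?_ rfl rfl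
  rw [Int.ediv_lt_iff_lt_mul hp]
  omega

lemma sum_Icc_one_ite_of_iff_le {P : ℤ → Prop} [DecidablePred P] {K s : ℤ} (hK : 0 ≤ K)
    (hs : 0 ≤ s) (hP : ∀ j, 0 < j → (P j ↔ j ≤ s)) (hPK : ¬ P (K + 1)) :
    ∑ j ∈ Icc 1 K, (if P j then (1 : ℤ) else 0) = s := by
  have hsK : s ≤ K := by
    by_contra h
    exact hPK ((hP _ (by omega)).2 (by omega))
  calc _ = ∑ j ∈ Icc 1 K, (if j ≤ s then (1 : ℤ) else 0) :=
        sum_congr rfl fun j hj => if_congr (hP j (by simp at hj; omega)) rfl rfl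
    _ = s := by rw [sum_Icc_ite_le (by omega) hsK]; ring

lemma floor_sqrt_eq_sum {x K : ℤ} (hK : 0 ≤ K) (hxK : x < (K + 1) ^ 2) :
    ⌊√(x : ℝ)⌋ = ∑ j ∈ Icc 1 K, if j ^ 2 ≤ x then (1 : ℤ) else 0 := by
  refine (sum_Icc_one_ite_of_iff_le hK (Int.floor_nonneg.2 (Real.sqrt_nonneg _))
    (fun j hj => ?_) (by omega)).symm
  rw [Int.le_floor, Real.le_sqrt' (by exact_mod_cast hj)]
  norm_cast

lemma floor_one_add_sqrt_div_two_eq_sum {x K : ℤ} (hK : 0 ≤ K) (hxK : x < (2 * K + 1) ^ 2) :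
    ⌊(1 + √(x : ℝ)) / 2⌋ = ∑ j ∈ Icc 1 K, if (2 * j - 1) ^ 2 ≤ x then (1 : ℤ) else 0 := by
  refine (sum_Icc_one_ite_of_iff_le hK (Int.floor_nonneg.2 (by positivity))
    (fun j hj => ?_) (by rw [show 2 * (K + 1) - 1 = 2 * K + 1 by ring]; omega)).symm
  have hj' : (0 : ℝ) < 2 * j - 1 := by
    have : (1 : ℝ) ≤ j := by exact_mod_cast hj
    linarith
  rw [Int.le_floor, le_div_iff₀ two_pos, mul_comm _ (2 : ℝ), ← sub_le_iff_le_add',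
    Real.le_sqrt' hj']
  norm_cast

lemma Int.sub_one_ediv_of_not_dvd {x p : ℤ} (hp : 0 < p) (h : ¬ p ∣ x) :
    (x - 1) / p = x / p := by
  have hx : x % p ≠ 0 := fun h0 => h (Int.dvd_of_emod_eq_zero h0)
  have := Int.emod_nonneg x hp.ne'
  have := Int.emod_lt_of_pos x hp
  refine (Int.ediv_emod_unique (r := x % p - 1) hp).2 ⟨?_, by omega, by omega⟩ |>.1
  linarith [Int.emod_add_mul_ediv x p]

lemma Int.add_ediv_sub_ediv {x c p : ℤ} (hc : 0 ≤ c) (hcp : c < p) :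
    (x + c) / p - x / p = if p ≤ x % p + c then 1 else 0 := by
  have hp : 0 < p := by omega
  rw [Int.add_ediv hp.ne', Int.ediv_eq_zero_of_lt hc hcp, Int.emod_eq_of_lt hc hcp,
    Int.natAbs_of_nonneg hp.le, Int.sign_eq_one_of_pos hp]
  ring

lemma Int.not_dvd_sq_add_sq_of_emod_four_eq_three {p x y : ℤ} (hp : Prime p) (hp0 : 0 < p)
    (hp4 : p % 4 = 3) (hy : ¬ p ∣ y) : ¬ p ∣ x ^ 2 + y ^ 2 := by
  intro hdvd
  have hpZ : (p.natAbs : ℤ) = p := Int.natAbs_of_nonneg hp0.le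
  have : Fact p.natAbs.Prime := ⟨Int.prime_iff_natAbs_prime.mp hp⟩
  refine ZMod.mod_four_ne_three_of_sq_eq_neg_sq' (p := p.natAbs) (x := x) (y := y) ?_ ?_
    (by omega)
  · rwa [Ne, ZMod.intCast_zmod_eq_zero_iff_dvd, hpZ]
  · rw [eq_neg_iff_add_eq_zero]
    exact_mod_cast (ZMod.intCast_zmod_eq_zero_iff_dvd _ _).2 (hpZ ▸ hdvd)

lemma four_mul_sub_one_not_dvd_sq_add {n c : ℤ} (hn : 3 < n) (hc1 : 1 ≤ c) (hc3 : c ≤ 3) :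
    ¬ 4 * n - 1 ∣ n ^ 2 + c := by
  intro h
  have h16 : 4 * n - 1 ∣ 16 * c + 1 := by
    rw [show 16 * c + 1 = 16 * (n ^ 2 + c) - (4 * n - 1) * (4 * n + 1) by ring]
    exact dvd_sub (h.mul_left 16) (dvd_mul_right _ _)
  have : n ≤ 12 := by have := Int.le_of_dvd (by omega) h16; omega
  interval_cases n <;> interval_cases c <;> omega

lemma sq_add_three_ediv {n : ℤ} (hn : 3 < n) :
    (n ^ 2 + 3) / (4 * n - 1) = n ^ 2 / (4 * n - 1) := by
  have hp : 0 < 4 * n - 1 := by omega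
  have key (c : ℤ) (hc1 : 1 ≤ c) (hc3 : c ≤ 3) :
      (n ^ 2 + c) / (4 * n - 1) = (n ^ 2 + (c - 1)) / (4 * n - 1) := by
    rw [← add_sub_assoc,
      Int.sub_one_ediv_of_not_dvd hp (four_mul_sub_one_not_dvd_sq_add hn hc1 hc3)]
  calc (n ^ 2 + 3) / (4 * n - 1) = (n ^ 2 + 2) / (4 * n - 1) := key 3 (by norm_num) le_rfl
    _ = (n ^ 2 + 1) / (4 * n - 1) := key 2 (by norm_num) (by norm_num)
    _ = n ^ 2 / (4 * n - 1) := by simpa using key 1 le_rfl (by norm_num)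

lemma Prime.sq_sub_one_ediv {p j : ℤ} (hp : Prime p) (hj0 : 0 < j) (hjp : j < p) :
    (j ^ 2 - 1) / p = j ^ 2 / p :=
  Int.sub_one_ediv_of_not_dvd (by omega) fun h =>
    absurd (Int.le_of_dvd hj0 (hp.dvd_of_dvd_pow h)) (by omega)

lemma not_dvd_sq_add_add_add_one {n p : ℤ} (hn : 0 < n) (hp : p = 4 * n - 1) (hprime : Prime p)
    (j : ℤ) : ¬ p ∣ j ^ 2 + (j + n + 1) := by
  intro h
  refine Int.not_dvd_sq_add_sq_of_emod_four_eq_three hprime (by omega) (by omega)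
    (x := 2 * j + 1) (y := 2) (fun h2 => ?_) ?_
  · have := Int.le_of_dvd two_pos h2
    omega
  · rw [show (2 * j + 1) ^ 2 + 2 ^ 2 = 4 * (j ^ 2 + (j + n + 1)) - p by rw [hp]; ring]
    exact dvd_sub (h.mul_left 4) dvd_rfl

lemma sum_Icc_add_one_sub_eq {M : Type*} [AddCommGroup M] (f g : ℤ → M) {n : ℤ} (hn : 0 ≤ n) :
    ∑ j ∈ Icc 1 (n + 1), (f (j + 1) - g j) =
      ∑ j ∈ Icc 1 n, (f j - g j) + (f (n + 1) - g (n + 1)) + (f (n + 1 + 1) - f 1) := by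
  calc _ = ∑ j ∈ Icc 1 (n + 1), (f (j + 1) - f j) + ∑ j ∈ Icc 1 (n + 1), (f j - g j) := by
        rw [← sum_add_distrib]
        exact sum_congr rfl fun _ _ => by abel
    _ = _ := by
        rw [Int.sum_Icc_sub f (by omega), ← insert_Icc_right_eq_Icc_add_one (by omega),
          sum_insert (by simp)]
        abel

lemma sum_floor_sqrt_mul_eq {n p : ℤ} (hn : 0 ≤ n) (hp : 0 < p) :
    ∑ m ∈ Icc 1 (n ^ 2 / p), ⌊√((m * p : ℤ) : ℝ)⌋ =
      ∑ j ∈ Icc 1 n, (n ^ 2 / p - (j ^ 2 - 1) / p) := by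
  have hMp : n ^ 2 / p * p ≤ n ^ 2 := Int.ediv_mul_le _ hp.ne'
  have hfloor : ∀ m ∈ Icc 1 (n ^ 2 / p),
      ⌊√((m * p : ℤ) : ℝ)⌋ = ∑ j ∈ Icc 1 n, if j ^ 2 ≤ m * p then (1 : ℤ) else 0 := by
    intro m hm
    have := mul_le_mul_of_nonneg_right (mem_Icc.1 hm).2 hp.le
    exact floor_sqrt_eq_sum hn (by nlinarith)
  rw [sum_congr rfl hfloor, sum_comm]
  refine sum_congr rfl fun j hj => ?_
  obtain ⟨hj1, hjn⟩ := mem_Icc.1 hj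
  refine sum_Icc_ite_le_mul hp ?_ (Int.ediv_le_ediv hp (by nlinarith))
  simpa using Int.ediv_nonneg (by nlinarith : 0 ≤ j ^ 2 - 1) hp.le

lemma sum_floor_one_add_sqrt_div_two_eq {n p : ℤ} (hn : 0 < n) (hp : p = 4 * n - 1) :
    ∑ m ∈ Icc 0 (n ^ 2 / p - 1), ⌊(1 + √((4 * m * p + 3 * p - 4 : ℤ) : ℝ)) / 2⌋ =
      ∑ j ∈ Icc 1 n, (n ^ 2 / p - (j ^ 2 - j + n) / p) := by
  have hp0 : 0 < p := by omega
  have hMp : n ^ 2 / p * p ≤ n ^ 2 := Int.ediv_mul_le _ hp0.ne'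
  have hfloor : ∀ m ∈ Icc 0 (n ^ 2 / p - 1), ⌊(1 + √((4 * m * p + 3 * p - 4 : ℤ) : ℝ)) / 2⌋ =
      ∑ j ∈ Icc 1 n, if j ^ 2 - j + n + 1 - p ≤ m * p then (1 : ℤ) else 0 := by
    intro m hm
    have := mul_le_mul_of_nonneg_right (mem_Icc.1 hm).2 hp0.le
    rw [floor_one_add_sqrt_div_two_eq_sum hn.le (by nlinarith)]
    exact sum_congr rfl fun j _ => if_congr (by constructor <;> intro h <;> linarith) rfl rfl
  rw [sum_congr rfl hfloor, sum_comm]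
  refine sum_congr rfl fun j hj => ?_
  obtain ⟨hj1, hjn⟩ := mem_Icc.1 hj
  have hq : (j ^ 2 - j + n + 1 - p - 1) / p = (j ^ 2 - j + n) / p - 1 := by
    rw [show j ^ 2 - j + n + 1 - p - 1 = j ^ 2 - j + n + (-1) * p by ring,
      Int.add_mul_ediv_right _ _ hp0.ne']
    ring
  have h0 := Int.ediv_nonneg (by nlinarith : 0 ≤ j ^ 2 - j + n) hp0.le
  have hM := Int.ediv_le_ediv hp0 (by nlinarith : j ^ 2 - j + n ≤ n ^ 2)
  rw [sum_Icc_ite_le_mul hp0 (by omega) (by omega), hq]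
  ring

lemma ncard_jumps_eq_sum {n p : ℤ} (hn : 1 < n) (hp : p = 4 * n - 1) (hprime : Prime p) :
    ({k : ℤ | 2 ≤ k ∧ k ≤ n + 2 ∧ p ≤ (k - 1) ^ 2 % p + (k + 1 - 3 * n) % p}.ncard : ℤ) =
      ∑ j ∈ Icc 1 (n + 1), (((j + 1) ^ 2 - (j + 1) + n) / p - j ^ 2 / p) := by
  have hp0 : 0 < p := by omega
  have hset : {k : ℤ | 2 ≤ k ∧ k ≤ n + 2 ∧ p ≤ (k - 1) ^ 2 % p + (k + 1 - 3 * n) % p} =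
      ↑({k ∈ Icc 2 (n + 2) | p ≤ (k - 1) ^ 2 % p + (k + 1 - 3 * n) % p}) := by
    ext k
    simp [and_assoc]
  rw [hset, Set.ncard_coe_finset, natCast_card_filter,
    show Icc 2 (n + 2) = (Icc 1 (n + 1)).map (addRightEmbedding 1) by
      rw [map_add_right_Icc]; norm_num [add_assoc],
    sum_map]
  refine sum_congr rfl fun j hj => ?_
  obtain ⟨hj1, hjn⟩ := mem_Icc.1 hj
  have hmod : (j + 1 + 1 - 3 * n) % p = j + n + 1 := by
    rw [show j + 1 + 1 - 3 * n = j + n + 1 + (-1) * p by rw [hp]; ring,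
      Int.add_mul_emod_self_right, Int.emod_eq_of_lt (by omega) (by omega)]
  rw [show (j + 1) ^ 2 - (j + 1) + n = j ^ 2 + (j + n + 1) - 1 by ring,
    Int.sub_one_ediv_of_not_dvd hp0 (not_dvd_sq_add_add_add_one (by omega) hp hprime j),
    addRightEmbedding_apply, add_sub_cancel_right, hmod,
    Int.add_ediv_sub_ediv (by omega) (by omega)]

lemma sum_floor_sqrt_sub_sum_floor_eq {n p : ℤ} (hn : 0 < n) (hp : p = 4 * n - 1)
    (hprime : Prime p) :
    ∑ m ∈ Icc 1 (n ^ 2 / p), ⌊√((m * p : ℤ) : ℝ)⌋ -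
        ∑ m ∈ Icc 0 (n ^ 2 / p - 1), ⌊(1 + √((4 * m * p + 3 * p - 4 : ℤ) : ℝ)) / 2⌋ =
      ∑ j ∈ Icc 1 n, ((j ^ 2 - j + n) / p - j ^ 2 / p) := by
  rw [sum_floor_sqrt_mul_eq hn.le (by omega), sum_floor_one_add_sqrt_div_two_eq hn hp,
    ← sum_sub_distrib]
  refine sum_congr rfl fun j hj => ?_
  obtain ⟨hj1, hjn⟩ := mem_Icc.1 hj
  rw [hprime.sq_sub_one_ediv (by omega) (by omega)]
  ring

theorem jumps_floor_identity (n p M : ℤ) (hn : 3 < n) (hp : p = 4 * n - 1)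
    (hprime : Prime p) (hM : M = n ^ 2 / p) :
    (∑ m ∈ Finset.Icc (1 : ℤ) M, ⌊Real.sqrt ((m * p : ℤ) : ℝ)⌋) -
        ∑ m ∈ Finset.Icc (0 : ℤ) (M - 1),
          ⌊(1 + Real.sqrt ((4 * m * p + 3 * p - 4 : ℤ) : ℝ)) / 2⌋ =
      (({k : ℤ | 2 ≤ k ∧ k ≤ n + 2 ∧
          p ≤ (k - 1) ^ 2 % p + (k + 1 - 3 * n) % p}.ncard : ℤ)) - M - 1 := by
  have hp0 : 0 < p := by omega
  have hf1 : (1 ^ 2 - 1 + n) / p = 0 := Int.ediv_eq_zero_of_lt (by omega) (by omega)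
  have hfg : ((n + 1) ^ 2 - (n + 1) + n) / p = (n + 1) ^ 2 / p := by
    rw [← hprime.sq_sub_one_ediv (by omega) (by omega)]
    ring_nf
  have hf2 : ((n + 1 + 1) ^ 2 - (n + 1 + 1) + n) / p = n ^ 2 / p + 1 := by
    rw [show (n + 1 + 1) ^ 2 - (n + 1 + 1) + n = n ^ 2 + 3 + 1 * p by rw [hp]; ring,
      Int.add_mul_ediv_right _ _ hp0.ne', hp, sq_add_three_ediv hn]
  subst hM
  rw [sum_floor_sqrt_sub_sum_floor_eq (by omega) hp hprime,
    ncard_jumps_eq_sum (by omega) hp hprime,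
    sum_Icc_add_one_sub_eq (fun j => (j ^ 2 - j + n) / p) (fun j => j ^ 2 / p) (by omega),
    hfg, hf1, hf2]
  ring
end
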